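/- arXiv:1309.0747 — 13 statements merged into one kernel-verified Lean document; each statement's English description precedes it below -/
import Mathlib

section
/- Let 0 < p ≤ 1 and let X be a p-normed space, regarded as a metric space with d(x,y) = ‖x−y‖^p. If X coarsely embeds into a real Hilbert space, then X strongly uniformly embeds into a real Hilbert space. -/
open Filter Set

/-- `T` is a coarse embedding between the "metric spaces" given by distance
functions `dX`, `dY`. -/
def IsCoarseEmb {X Y : Type*} (dX : X → X → ℝ) (dY : Y → Y → ℝ) (T : X → Y) : Prop :=
  ∃ ρ₁ ρ₂ : ℝ → ℝ,
    MonotoneOn ρ₁ (Set.Ici 0) ∧ MonotoneOn ρ₂ (Set.Ici 0) ∧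
    (∀ t, 0 ≤ t → 0 ≤ ρ₁ t) ∧ (∀ t, 0 ≤ t → 0 ≤ ρ₂ t) ∧
    Filter.Tendsto ρ₁ Filter.atTop Filter.atTop ∧
    ∀ x y, ρ₁ (dX x y) ≤ dY (T x) (T y) ∧ dY (T x) (T y) ≤ ρ₂ (dX x y)

/-- `T` is a uniform embedding: `T` is injective and both `T` and its inverse on the
image are uniformly continuous. -/
def IsUnifEmb {X Y : Type*} (dX : X → X → ℝ) (dY : Y → Y → ℝ) (T : X → Y) : Prop :=
  Function.Injective T ∧
  (∀ ε > (0 : ℝ), ∃ δ > (0 : ℝ), ∀ x y, dX x y < δ → dY (T x) (T y) < ε) ∧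
  (∀ ε > (0 : ℝ), ∃ δ > (0 : ℝ), ∀ x y, dY (T x) (T y) < δ → dX x y < ε)

universe u

open scoped Topology ENNReal

/-!
Write `d(x, y) = ‖x - y‖ ^ p` and let `D` be the chain distance: the infimum of the `d`-lengths
of chains from `x` to `y` all of whose steps have `d`-length at most `1`. It is a pseudometric
with `D ≤ d` below scale `1` and `D(x, y) ≤ ‖x - y‖ + 2` (subdivide the segment), and a coarse
map `T` into a Hilbert space `H`, which moves points at `d`-distance `≤ 2` by at most `C`,
satisfies `‖T x - T y‖ ≤ C (2 D(x, y) + 1)`.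

Let `Φ x` minimise `u ↦ sup_z (‖u - T z‖² - M D(x, z)²)`. By the parallelogram law this function
is uniformly convex, so the minimiser exists, and comparing the functions for nearby `x` and `y`
at the midpoint of `Φ x` and `Φ y` shows that `Φ` is `1/2`-Hölder for `D` below scale `1`,
while it stays within `2C` of `T`.

Put `λₙ = 2 ^ (n / p)`, so that `d(λₙ x, λₙ y) = 2ⁿ d(x, y)`, and embed `X` into `ℓ²(H)` by
`x ↦ (2⁻ⁿ (1 + λₙ)⁻¹ (Φ (λₙ x) - Φ 0))ₙ`. Coordinate `0` and the geometric weights give the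
coarse bounds, the Hölder bound on the coordinates with `2ⁿ d(x, y) ≤ 1` and the weights on the
others give uniform continuity, and a coordinate at which `x` and `y` are blown apart beyond the
scale where `T` separates points gives uniform continuity of the inverse.
-/

noncomputable section

lemma dist_le_of_local_bound {E : Type*} [PseudoMetricSpace E] {g : ℕ → E}
    {P : ℕ → ℝ} {C : ℝ} {m : ℕ} (hP : Monotone P) (hstep : ∀ k < m, P (k + 1) ≤ P k + 1)
    (hg : ∀ i j, i ≤ j → P j - P i ≤ 2 → dist (g i) (g j) ≤ C) :
    dist (g 0) (g m) ≤ C * (2 * (P m - P 0) + 1) := by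
  have hC : 0 ≤ C := by simpa using hg 0 0 le_rfl (by simp)
  -- `j` is the last checkpoint: the stretch after it has increment at most `1`, and a new
  -- checkpoint is set only after an increment larger than `1`, which pays for its cost `C`.
  have key : ∀ n ≤ m, ∃ j ≤ n, P n - P j ≤ 1 ∧ dist (g 0) (g j) ≤ 2 * C * (P j - P 0) := by
    intro n hn
    induction n with
    | zero => exact ⟨0, le_rfl, by simp, by simp⟩
    | succ n ih =>
      obtain ⟨j, hjn, hPj, hgj⟩ := ih (by omega)
      have hsucc := hstep n (by omega)
      by_cases hfar : P (n + 1) - P j ≤ 1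
      · exact ⟨j, by omega, hfar, hgj⟩
      refine ⟨n + 1, le_rfl, by simp, ?_⟩
      calc dist (g 0) (g (n + 1)) ≤ dist (g 0) (g j) + dist (g j) (g (n + 1)) := dist_triangle _ _ _
        _ ≤ 2 * C * (P j - P 0) + C := add_le_add hgj (hg j (n + 1) (by omega) (by linarith))
        _ ≤ 2 * C * (P (n + 1) - P 0) := by nlinarith
  obtain ⟨j, hjm, hPj, hgj⟩ := key m le_rfl
  calc dist (g 0) (g m) ≤ dist (g 0) (g j) + dist (g j) (g m) := dist_triangle _ _ _
    _ ≤ 2 * C * (P j - P 0) + C := add_le_add hgj (hg j m hjm (by linarith))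
    _ ≤ C * (2 * (P m - P 0) + 1) := by nlinarith [hP hjm]

theorem exists_forall_le_of_midpoint_le {E : Type*} [PseudoMetricSpace E] [CompleteSpace E]
    [Nonempty E] {f : E → ℝ} (hf : LowerSemicontinuous f) (hbdd : BddBelow (range f))
    (hmid : ∀ u v, ∃ w, f w + dist u v ^ 2 / 4 ≤ (f u + f v) / 2) :
    ∃ u, ∀ v, f u ≤ f v := by
  set m := ⨅ u, f u
  have hm : ∀ u, m ≤ f u := ciInf_le hbdd
  have hr : Tendsto (fun k : ℕ => 1 / ((k : ℝ) + 1)) atTop (𝓝 0) :=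
    tendsto_one_div_add_atTop_nhds_zero_nat
  choose u hu using fun k : ℕ => exists_lt_of_ciInf_lt
    (lt_add_of_pos_right m (by positivity : (0 : ℝ) < (1 / ((k : ℝ) + 1)) ^ 2))
  have hdist : ∀ j k n, n ≤ j → n ≤ k → dist (u j) (u k) ≤ 2 * (1 / ((n : ℝ) + 1)) := by
    intro j k n hj hk
    obtain ⟨w, hw⟩ := hmid (u j) (u k)
    have hr_anti : ∀ i, n ≤ i → 1 / ((i : ℝ) + 1) ≤ 1 / ((n : ℝ) + 1) := fun i hi =>
      one_div_le_one_div_of_le (by positivity) (by exact_mod_cast Nat.add_le_add_right hi 1)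
    have hj' := pow_le_pow_left₀ (by positivity) (hr_anti j hj) 2
    have hk' := pow_le_pow_left₀ (by positivity) (hr_anti k hk) 2
    refine le_of_pow_le_pow_left₀ two_ne_zero (by positivity) ?_
    linarith [hm w, hu j, hu k]
  obtain ⟨u₀, hu₀⟩ := cauchySeq_tendsto_of_complete <| cauchySeq_of_le_tendsto_0
    (fun n : ℕ => 2 * (1 / ((n : ℝ) + 1))) hdist (by simpa using hr.const_mul 2)
  refine ⟨u₀, fun v => le_trans ?_ (hm v)⟩
  by_contra! hlt
  -- lower semicontinuity at the limit contradicts `f (u k) → m`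
  have hlsc := hu₀.eventually (hf u₀ ((m + f u₀) / 2) (by linarith))
  have hsmall := (hr.pow 2).eventually
    (gt_mem_nhds (by simpa using sub_pos.2 hlt : (0 : ℝ) ^ 2 < (f u₀ - m) / 2))
  obtain ⟨k, hk₁, hk₂⟩ := (hlsc.and hsmall).exists
  linarith [hu k]

section Penalty

variable {Y H : Type*} [PseudoMetricSpace Y] [PseudoMetricSpace H]

def penalty (T : Y → H) (M : ℝ) (x : Y) (u : H) : ℝ :=
  ⨆ z, dist u (T z) ^ 2 - M * dist x z ^ 2

variable {T : Y → H} {C M : ℝ}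

lemma penalty_le {x : Y} {u : H} {b : ℝ} (h : ∀ z, dist u (T z) ^ 2 - M * dist x z ^ 2 ≤ b) :
    penalty T M x u ≤ b :=
  haveI : Nonempty Y := ⟨x⟩
  ciSup_le h

variable (hT : ∀ x y, dist (T x) (T y) ≤ C * (2 * dist x y + 1)) (hM : 16 * C ^ 2 ≤ M)
include hT hM

lemma penalty_term_le (x z : Y) (u : H) :
    dist u (T z) ^ 2 - M * dist x z ^ 2 ≤ 2 * dist u (T x) ^ 2 + 4 * C ^ 2 := by
  have h : dist u (T z) ≤ dist u (T x) + C * (2 * dist x z + 1) := by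
    linarith [dist_triangle u (T x) (T z), hT x z]
  have h2 := pow_le_pow_left₀ dist_nonneg h 2
  nlinarith [sq_nonneg (dist u (T x) - C * (2 * dist x z + 1)), sq_nonneg (dist x z),
    mul_nonneg (sq_nonneg C) (sq_nonneg (2 * dist x z - 1))]

lemma bddAbove_penalty_terms (x : Y) (u : H) :
    BddAbove (range fun z => dist u (T z) ^ 2 - M * dist x z ^ 2) :=
  ⟨_, forall_mem_range.2 fun z => penalty_term_le hT hM x z u⟩

lemma le_penalty (x z : Y) (u : H) :
    dist u (T z) ^ 2 - M * dist x z ^ 2 ≤ penalty T M x u :=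
  le_ciSup (bddAbove_penalty_terms hT hM x u) z

lemma sq_dist_le_penalty (x : Y) (u : H) : dist u (T x) ^ 2 ≤ penalty T M x u := by
  simpa using le_penalty hT hM x x u

lemma penalty_nonneg (x : Y) (u : H) : 0 ≤ penalty T M x u :=
  (sq_nonneg _).trans (sq_dist_le_penalty hT hM x u)

lemma lowerSemicontinuous_penalty (x : Y) : LowerSemicontinuous (penalty T M x) :=
  lowerSemicontinuous_ciSup (bddAbove_penalty_terms hT hM x) fun _ =>
    ((continuous_id.dist continuous_const).pow 2 |>.sub continuous_const).lowerSemicontinuous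

lemma penalty_self_le (x : Y) : penalty T M x (T x) ≤ 2 * C ^ 2 := by
  refine penalty_le fun z => ?_
  have h2 := pow_le_pow_left₀ dist_nonneg (hT x z) 2
  nlinarith [mul_nonneg (sq_nonneg C) (sq_nonneg (6 * dist x z - 1)), sq_nonneg (dist x z)]

lemma penalty_le_penalty_add {x y : Y} {u : H} (hu : dist u (T x) ≤ 2 * C)
    (hxy : dist x y ≤ 1) : penalty T M y u ≤ penalty T M x u + 8 * M * dist x y := by
  have hC : 0 ≤ C := by simpa using hT x x
  refine penalty_le fun z => ?_
  set a := dist u (T z)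
  set b := dist y z
  set e := dist x z
  set δ := dist x y
  rcases le_or_gt (a ^ 2 - M * b ^ 2) 0 with hneg | hpos
  · nlinarith [penalty_nonneg hT hM x u, dist_nonneg (x := x) (y := y)]
  have ha : a ≤ 6 * C + 2 * C * b := by
    have h1 := dist_triangle4 u (T x) (T y) (T z)
    have h2 := hT x y
    have h3 := hT y z
    nlinarith
  -- the penalty dominates once `b > 3`, so only nearby `z` matter
  have hb : b ≤ 3 := by
    by_contra! hb
    have := pow_le_pow_left₀ dist_nonneg ha 2
    nlinarith [mul_nonneg (mul_nonneg (sq_nonneg C) (by linarith : (0 : ℝ) ≤ b - 3))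
      (by linarith : (0 : ℝ) ≤ b + 1)]
  have he : e ≤ δ + b := dist_triangle x y z
  have hδ : 0 ≤ δ := dist_nonneg
  have hb2 : e ^ 2 - 2 * δ * e ≤ b ^ 2 := by
    rcases le_or_gt δ e with h | h
    · nlinarith [dist_nonneg (x := y) (y := z)]
    · nlinarith [dist_nonneg (x := x) (y := z)]
  have hMe : M * (e ^ 2 - 2 * δ * e) ≤ M * b ^ 2 :=
    mul_le_mul_of_nonneg_left hb2 (by nlinarith)
  have hMδ : M * δ * e ≤ M * δ * 4 := mul_le_mul_of_nonneg_left (by linarith) (by nlinarith)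
  nlinarith [le_penalty hT hM x z u]

end Penalty

section Regularization

variable {Y H : Type*} [PseudoMetricSpace Y] [NormedAddCommGroup H] [InnerProductSpace ℝ H]
  {T : Y → H} {C M : ℝ}
  (hT : ∀ x y, dist (T x) (T y) ≤ C * (2 * dist x y + 1)) (hM : 16 * C ^ 2 ≤ M)
include hT hM

lemma penalty_midpoint_le (x : Y) (u v : H) :
    penalty T M x (midpoint ℝ u v) + dist u v ^ 2 / 4 ≤
      (penalty T M x u + penalty T M x v) / 2 := by
  rw [← le_sub_iff_add_le]
  refine penalty_le fun z => ?_
  have := EuclideanGeometry.dist_sq_add_dist_sq_eq_two_mul_dist_midpoint_sq_add_half_dist_sq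
    (T z) u v
  simp only [dist_comm (T z)] at this
  linarith [le_penalty hT hM x z u, le_penalty hT hM x z v]

theorem exists_dist_le_and_sq_dist_le [CompleteSpace H] :
    ∃ Φ : Y → H, (∀ x, dist (Φ x) (T x) ≤ 2 * C) ∧
      ∀ x y, dist x y ≤ 1 → dist (Φ x) (Φ y) ^ 2 ≤ 32 * M * dist x y := by
  choose Φ hΦ using fun x => exists_forall_le_of_midpoint_le
    (lowerSemicontinuous_penalty hT hM x) ⟨0, forall_mem_range.2 (penalty_nonneg hT hM x)⟩
    fun u v => ⟨midpoint ℝ u v, penalty_midpoint_le hT hM x u v⟩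
  have hclose : ∀ x, dist (Φ x) (T x) ≤ 2 * C := fun x => by
    have hC : 0 ≤ C := by simpa using hT x x
    refine le_of_pow_le_pow_left₀ two_ne_zero (by positivity) ?_
    nlinarith [sq_dist_le_penalty hT hM x (Φ x), hΦ x (T x), penalty_self_le hT hM x]
  refine ⟨Φ, hclose, fun x y hxy => ?_⟩
  have hyx := penalty_le_penalty_add hT hM (hclose x) hxy
  have hxy' := penalty_le_penalty_add hT hM (hclose y) (by rwa [dist_comm])
  have hmid := penalty_midpoint_le hT hM y (Φ x) (Φ y)
  rw [dist_comm y x] at hxy'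
  linarith [hΦ x (Φ y), hΦ y (midpoint ℝ (Φ x) (Φ y))]

end Regularization

section SquareSummable

variable {ι E : Type*} [NormedAddCommGroup E]

lemma lp.norm_sq_le_tsum (g : lp (fun _ : ι => E) 2) {b : ι → ℝ} (hb : Summable b)
    (h : ∀ i, ‖g i‖ ^ 2 ≤ b i) : ‖g‖ ^ 2 ≤ ∑' i, b i := by
  have hsum := (lp.memℓp g).summable (by norm_num : (0 : ℝ) < (2 : ℝ≥0∞).toReal)
  have h2 := lp.norm_rpow_eq_tsum (by norm_num : (0 : ℝ) < (2 : ℝ≥0∞).toReal) g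
  simp only [ENNReal.toReal_ofNat, Real.rpow_two] at hsum h2
  exact h2 ▸ hsum.tsum_le_tsum h hb

lemma sq_geometric_eq (B : ℝ) (n : ℕ) : (2⁻¹ ^ n * B) ^ 2 = 4⁻¹ ^ n * B ^ 2 := by
  rw [mul_pow, ← pow_mul, mul_comm n 2, pow_mul]
  norm_num

lemma summable_sq_geometric (B : ℝ) : Summable fun n : ℕ => (2⁻¹ ^ n * B) ^ 2 := by
  simpa only [sq_geometric_eq] using
    (summable_geometric_of_lt_one (by norm_num : (0 : ℝ) ≤ 4⁻¹) (by norm_num)).mul_right (B ^ 2)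

lemma memℓp_two_of_norm_le_geometric {f : ℕ → E} {B : ℝ} (hf : ∀ n, ‖f n‖ ≤ 2⁻¹ ^ n * B) :
    Memℓp f 2 := by
  refine memℓp_gen ((summable_sq_geometric B).of_nonneg_of_le (fun n => by positivity) fun n => ?_)
  simpa using pow_le_pow_left₀ (norm_nonneg _) (hf n) 2

lemma lp.norm_le_of_norm_le_geometric (g : lp (fun _ : ℕ => E) 2) {B : ℝ} (hB : 0 ≤ B)
    (hg : ∀ n, ‖g n‖ ≤ 2⁻¹ ^ n * B) : ‖g‖ ≤ 2 * B := by
  refine le_of_pow_le_pow_left₀ two_ne_zero (by positivity) ?_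
  refine (lp.norm_sq_le_tsum g (summable_sq_geometric B)
    fun n => pow_le_pow_left₀ (norm_nonneg _) (hg n) 2).trans ?_
  have : ∑' n : ℕ, (2⁻¹ ^ n * B) ^ 2 = 4 / 3 * B ^ 2 := by
    simp only [sq_geometric_eq]
    rw [tsum_mul_right, tsum_geometric_of_lt_one (by norm_num) (by norm_num)]
    norm_num
  nlinarith [sq_nonneg B]

end SquareSummable

lemma tendsto_tsum_min_geometric {K c : ℝ} (hK : 0 ≤ K) (hc : 0 ≤ c) :
    Tendsto (fun t => ∑' n : ℕ, min (K * 2 ^ n * t) (c * 4⁻¹ ^ n)) (𝓝[≥] 0) (𝓝 0) := by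
  have hsum : Summable fun n : ℕ => c * 4⁻¹ ^ n :=
    (summable_geometric_of_lt_one (by norm_num) (by norm_num)).mul_left c
  have := tendsto_tsum_of_dominated_convergence (𝓕 := 𝓝[≥] (0 : ℝ))
    (f := fun t n => min (K * 2 ^ n * t) (c * 4⁻¹ ^ n)) (g := fun _ => 0) hsum (fun n => ?_) ?_
  · simpa using this
  · have hcont : Continuous fun t : ℝ => min (K * 2 ^ n * t) (c * 4⁻¹ ^ n) := by fun_prop
    have := (hcont.tendsto 0).mono_left (nhdsWithin_le_nhds (s := Ici 0))
    rwa [mul_zero, min_eq_left (by positivity)] at this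
  · filter_upwards [self_mem_nhdsWithin] with t (ht : 0 ≤ t) n
    rw [Real.norm_of_nonneg (le_min (by positivity) (by positivity))]
    exact min_le_right _ _

def scale (p : ℝ) (n : ℕ) : ℝ := (2 ^ n : ℝ) ^ p⁻¹

def weight (p : ℝ) (n : ℕ) : ℝ := 2⁻¹ ^ n / (1 + scale p n)

lemma scale_nonneg (p : ℝ) (n : ℕ) : 0 ≤ scale p n := Real.rpow_nonneg (by positivity) _

lemma scale_zero (p : ℝ) : scale p 0 = 1 := by simp [scale]

lemma weight_pos (p : ℝ) (n : ℕ) : 0 < weight p n := by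
  have := scale_nonneg p n
  unfold weight; positivity

lemma weight_le_one (p : ℝ) (n : ℕ) : weight p n ≤ 1 := by
  have := scale_nonneg p n
  rw [weight, div_le_one (by positivity)]
  linarith [pow_le_one₀ (by norm_num : (0 : ℝ) ≤ 2⁻¹) (by norm_num : (2⁻¹ : ℝ) ≤ 1) (n := n)]

lemma weight_zero (p : ℝ) : weight p 0 = 2⁻¹ := by norm_num [weight, scale_zero]

lemma weight_mul_le {A B t : ℝ} (hA : 0 ≤ A) (hB : 0 ≤ B) (ht : 0 ≤ t) (p : ℝ) (n : ℕ) :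
    weight p n * (A + B * (scale p n * t)) ≤ 2⁻¹ ^ n * (A + B * t) := by
  have hs := scale_nonneg p n
  rw [weight, div_mul_eq_mul_div, div_le_iff₀ (by positivity), mul_assoc]
  gcongr
  nlinarith [mul_nonneg hB ht, mul_nonneg (mul_nonneg hB ht) hs, mul_nonneg hA hs]

section Multiscale

variable {X H : Type*} [AddCommGroup X] [Module ℝ X] [NormedAddCommGroup H] [NormedSpace ℝ H]

def multiscale (p : ℝ) (F : X → H) (x : X) (n : ℕ) : H :=
  weight p n • (F (scale p n • x) - F 0)

lemma norm_multiscale_sub {p : ℝ} (F : X → H) (x y : X) (n : ℕ) :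
    ‖multiscale p F x n - multiscale p F y n‖ =
      weight p n * dist (F (scale p n • x)) (F (scale p n • y)) := by
  rw [multiscale, multiscale, ← smul_sub, sub_sub_sub_cancel_right, norm_smul,
    Real.norm_of_nonneg (weight_pos p n).le, dist_eq_norm]

lemma weight_mul_dist_le_dist {p : ℝ} {F : X → H} {S : X → lp (fun _ : ℕ => H) 2}
    (hS : ∀ x, ⇑(S x) = multiscale p F x) (x y : X) (n : ℕ) :
    weight p n * dist (F (scale p n • x)) (F (scale p n • y)) ≤ dist (S x) (S y) := by
  rw [← norm_multiscale_sub, dist_eq_norm, ← hS, ← hS, ← Pi.sub_apply, ← lp.coeFn_sub]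
  exact lp.norm_apply_le_norm two_ne_zero _ n

end Multiscale

structure PNorm (p : ℝ) (X : Type*) [AddCommGroup X] [Module ℝ X] where
  nrm : X → ℝ
  exponent_pos : 0 < p
  nrm_nonneg : ∀ x, 0 ≤ nrm x
  nrm_eq_zero : ∀ x, nrm x = 0 ↔ x = 0
  nrm_smul : ∀ (a : ℝ) (x : X), nrm (a • x) = |a| * nrm x
  rpow_nrm_add_le : ∀ x y, nrm (x + y) ^ p ≤ nrm x ^ p + nrm y ^ p

namespace PNorm

variable {p : ℝ} {X : Type*} [AddCommGroup X] [Module ℝ X] (N : PNorm p X)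

def pdist (x y : X) : ℝ := N.nrm (x - y) ^ p

lemma pdist_nonneg (x y : X) : 0 ≤ N.pdist x y := Real.rpow_nonneg (N.nrm_nonneg _) _

lemma pdist_comm (x y : X) : N.pdist x y = N.pdist y x := by
  rw [pdist, pdist, ← neg_sub, ← neg_one_smul ℝ (y - x), N.nrm_smul, abs_neg, abs_one, one_mul]

lemma pdist_triangle (x y z : X) : N.pdist x z ≤ N.pdist x y + N.pdist y z := by
  simpa only [pdist, sub_add_sub_cancel] using N.rpow_nrm_add_le (x - y) (y - z)

lemma pdist_eq_zero {x y : X} : N.pdist x y = 0 ↔ x = y := by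
  rw [pdist, Real.rpow_eq_zero (N.nrm_nonneg _) N.exponent_pos.ne', N.nrm_eq_zero, sub_eq_zero]

lemma pdist_self (x : X) : N.pdist x x = 0 := N.pdist_eq_zero.2 rfl

lemma pdist_rpow_inv (x y : X) : N.pdist x y ^ p⁻¹ = N.nrm (x - y) :=
  Real.rpow_rpow_inv (N.nrm_nonneg _) N.exponent_pos.ne'

lemma pdist_smul {a : ℝ} (ha : 0 ≤ a) (x y : X) :
    N.pdist (a • x) (a • y) = a ^ p * N.pdist x y := by
  rw [pdist, pdist, ← smul_sub, N.nrm_smul, abs_of_nonneg ha, Real.mul_rpow ha (N.nrm_nonneg _)]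

lemma pdist_scale_smul (n : ℕ) (x y : X) :
    N.pdist (scale p n • x) (scale p n • y) = 2 ^ n * N.pdist x y := by
  rw [N.pdist_smul (scale_nonneg p n), scale, Real.rpow_inv_rpow (by positivity)
    N.exponent_pos.ne']

lemma nrm_scale_smul_sub (n : ℕ) (x y : X) :
    N.nrm (scale p n • x - scale p n • y) = scale p n * N.nrm (x - y) := by
  rw [← smul_sub, N.nrm_smul, abs_of_nonneg (scale_nonneg p n)]

lemma nrm_le_one_of_pdist_le_one {x y : X} (h : N.pdist x y ≤ 1) : N.nrm (x - y) ≤ 1 := by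
  rw [← N.pdist_rpow_inv]
  exact Real.rpow_le_one (N.pdist_nonneg x y) h (inv_nonneg.2 N.exponent_pos.le)

lemma pdist_le_sum_of_le (c : ℕ → X) {i j : ℕ} (hij : i ≤ j) :
    N.pdist (c i) (c j) ≤ ∑ k ∈ Finset.Ico i j, N.pdist (c k) (c (k + 1)) := by
  induction j, hij using Nat.le_induction with
  | base => simp [pdist_self]
  | succ j hij ih =>
    rw [Finset.sum_Ico_succ_top hij]
    exact (N.pdist_triangle _ (c j) _).trans (by linarith)

def chainLengths (x y : X) : Set ℝ :=
  {s | ∃ (m : ℕ) (c : ℕ → X), c 0 = x ∧ c m = y ∧ (∀ i < m, N.pdist (c i) (c (i + 1)) ≤ 1) ∧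
      s = ∑ i ∈ Finset.range m, N.pdist (c i) (c (i + 1))}

def chainDist (x y : X) : ℝ := sInf (N.chainLengths x y)

lemma nonneg_of_mem_chainLengths {x y : X} {s : ℝ} (hs : s ∈ N.chainLengths x y) : 0 ≤ s := by
  obtain ⟨m, c, -, -, -, rfl⟩ := hs
  exact Finset.sum_nonneg fun i _ => N.pdist_nonneg _ _

lemma chainDist_le_of_mem {x y : X} {s : ℝ} (hs : s ∈ N.chainLengths x y) : N.chainDist x y ≤ s :=
  csInf_le ⟨0, fun _ => N.nonneg_of_mem_chainLengths⟩ hs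

lemma chainDist_nonneg (x y : X) : 0 ≤ N.chainDist x y :=
  Real.sInf_nonneg fun _ => N.nonneg_of_mem_chainLengths

lemma chainDist_self (x : X) : N.chainDist x x = 0 :=
  (N.chainDist_le_of_mem ⟨0, fun _ => x, rfl, rfl, by simp, by simp⟩).antisymm
    (N.chainDist_nonneg x x)

lemma chainDist_le_pdist {x y : X} (h : N.pdist x y ≤ 1) : N.chainDist x y ≤ N.pdist x y :=
  N.chainDist_le_of_mem ⟨1, fun i => if i = 0 then x else y, rfl, rfl, by simpa using h, by simp⟩

lemma exists_mem_chainLengths_le (x y : X) :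
    ∃ s ∈ N.chainLengths x y, s ≤ N.nrm (x - y) + 2 := by
  set n : ℕ := ⌈N.nrm (x - y)⌉₊ + 1
  have hn : (0 : ℝ) < n := by positivity
  have hstep : N.nrm (x - y) / n ≤ 1 := by
    rw [div_le_one hn]
    exact (Nat.le_ceil _).trans (by simp [n])
  let c : ℕ → X := fun i => x + ((i : ℝ) / n) • (y - x)
  have hc : ∀ i, N.pdist (c i) (c (i + 1)) = (N.nrm (x - y) / n) ^ p := by
    intro i
    have : c i - c (i + 1) = (1 / n : ℝ) • (x - y) := by
      simp only [c]; push_cast; module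
    rw [pdist, this, N.nrm_smul, abs_of_pos (by positivity), one_div, inv_mul_eq_div]
  have hle : (N.nrm (x - y) / n) ^ p ≤ 1 :=
    Real.rpow_le_one (div_nonneg (N.nrm_nonneg _) hn.le) hstep N.exponent_pos.le
  refine ⟨_, ⟨n, c, by simp [c], by simp [c, hn.ne'], fun i _ => (hc i).trans_le hle, rfl⟩, ?_⟩
  simp only [hc, Finset.sum_const, Finset.card_range, nsmul_eq_mul]
  calc (n : ℝ) * (N.nrm (x - y) / n) ^ p ≤ n := mul_le_of_le_one_right hn.le hle
    _ ≤ N.nrm (x - y) + 2 := by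
      have := Nat.ceil_lt_add_one (N.nrm_nonneg (x - y))
      simp only [n]; push_cast; linarith

lemma chainLengths_nonempty (x y : X) : (N.chainLengths x y).Nonempty :=
  let ⟨s, hs, _⟩ := N.exists_mem_chainLengths_le x y; ⟨s, hs⟩

lemma chainDist_le_nrm_add_two (x y : X) : N.chainDist x y ≤ N.nrm (x - y) + 2 :=
  let ⟨_, hs, hle⟩ := N.exists_mem_chainLengths_le x y; (N.chainDist_le_of_mem hs).trans hle

lemma chainLengths_subset_symm (x y : X) : N.chainLengths x y ⊆ N.chainLengths y x := by
  rintro s ⟨m, c, hc0, hcm, hstep, rfl⟩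
  have hrev : ∀ i < m, c (m - (i + 1) + 1) = c (m - i) := fun i hi => by
    rw [show m - (i + 1) + 1 = m - i by omega]
  refine ⟨m, fun i => c (m - i), by simpa, by simpa, fun i hi => ?_, ?_⟩
  · change N.pdist (c (m - i)) (c (m - (i + 1))) ≤ 1
    rw [N.pdist_comm, ← hrev i hi]
    exact hstep _ (by omega)
  · rw [← Finset.sum_range_reflect]
    refine Finset.sum_congr rfl fun i hi => ?_
    have hi := Finset.mem_range.1 hi
    change _ = N.pdist (c (m - i)) (c (m - (i + 1)))
    rw [N.pdist_comm, ← hrev i hi, show m - 1 - i = m - (i + 1) by omega]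

lemma chainDist_comm (x y : X) : N.chainDist x y = N.chainDist y x :=
  congrArg sInf ((N.chainLengths_subset_symm x y).antisymm (N.chainLengths_subset_symm y x))

lemma add_mem_chainLengths {x y z : X} {s t : ℝ} (hs : s ∈ N.chainLengths x y)
    (ht : t ∈ N.chainLengths y z) : s + t ∈ N.chainLengths x z := by
  obtain ⟨m, c, hc0, hcm, hc, rfl⟩ := hs
  obtain ⟨n, e, he0, hen, he, rfl⟩ := ht
  let ce : ℕ → X := fun i => if i ≤ m then c i else e (i - m)
  have hleft : ∀ i ≤ m, ce i = c i := fun i hi => if_pos hi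
  have hright : ∀ j, ce (m + j) = e j := by
    rintro (_ | j)
    · simp [ce, hcm, he0]
    · simp [ce]
  have hright' : ∀ j, ce (m + j + 1) = e (j + 1) := fun j => hright (j + 1)
  refine ⟨m + n, ce, by simp [ce, hc0], by rw [hright, hen], fun i hi => ?_, ?_⟩
  · rcases lt_or_ge i m with him | him
    · rw [hleft i him.le, hleft (i + 1) him]; exact hc i him
    · obtain ⟨j, rfl⟩ := Nat.exists_eq_add_of_le him
      rw [hright, hright']; exact he j (by omega)
  · rw [Finset.sum_range_add]
    congr 1
    · refine Finset.sum_congr rfl fun i hi => ?_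
      have hi := Finset.mem_range.1 hi
      rw [hleft i hi.le, hleft (i + 1) hi]
    · exact Finset.sum_congr rfl fun j _ => by rw [hright, hright']

lemma chainDist_triangle (x y z : X) :
    N.chainDist x z ≤ N.chainDist x y + N.chainDist y z := by
  refine le_of_forall_pos_le_add fun ε hε => ?_
  obtain ⟨s, hs, hs'⟩ := Real.lt_sInf_add_pos (N.chainLengths_nonempty x y) (half_pos hε)
  obtain ⟨t, ht, ht'⟩ := Real.lt_sInf_add_pos (N.chainLengths_nonempty y z) (half_pos hε)
  have := N.chainDist_le_of_mem (N.add_mem_chainLengths hs ht)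
  unfold chainDist at *
  linarith

abbrev chainPseudoMetric : PseudoMetricSpace X where
  dist := N.chainDist
  dist_self := N.chainDist_self
  dist_comm := N.chainDist_comm
  dist_triangle := N.chainDist_triangle

lemma dist_le_chainDist {E : Type*} [PseudoMetricSpace E] {T : X → E} {C : ℝ}
    (hT : ∀ x y, N.pdist x y ≤ 2 → dist (T x) (T y) ≤ C) (x y : X) :
    dist (T x) (T y) ≤ C * (2 * N.chainDist x y + 1) := by
  have hC : 0 ≤ C := by simpa using hT x x (by simp [pdist_self])
  have hchain : ∀ s ∈ N.chainLengths x y, dist (T x) (T y) - C ≤ 2 * C * s := by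
    rintro _ ⟨m, c, rfl, rfl, hc, rfl⟩
    have hP : Monotone fun k => ∑ i ∈ Finset.range k, N.pdist (c i) (c (i + 1)) :=
      monotone_nat_of_le_succ fun k => by
        simp only [Finset.sum_range_succ, le_add_iff_nonneg_right, pdist_nonneg]
    have := dist_le_of_local_bound (g := T ∘ c) hP
      (fun k hk => by simp only [Finset.sum_range_succ]; linarith [hc k hk])
      (fun i j hij hP2 => hT _ _ ((N.pdist_le_sum_of_le c hij).trans
        (by rwa [Finset.sum_Ico_eq_sub _ hij])))
    simp only [Function.comp, Finset.range_zero, Finset.sum_empty, sub_zero] at this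
    linarith
  have hsInf : dist (T x) (T y) - C ≤ 2 * C * N.chainDist x y := by
    rw [chainDist, ← smul_eq_mul, ← Real.sInf_smul_of_nonneg (by positivity)]
    refine le_csInf ((N.chainLengths_nonempty x y).smul_set) ?_
    rintro _ ⟨s, hs, rfl⟩
    exact hchain s hs
  linarith

theorem exists_regularization {H : Type*} [NormedAddCommGroup H] [InnerProductSpace ℝ H]
    [CompleteSpace H] {T : X → H} {C : ℝ} (hT : ∀ x y, N.pdist x y ≤ 2 → dist (T x) (T y) ≤ C) :
    ∃ Φ : X → H, (∀ x, dist (Φ x) (T x) ≤ 2 * C) ∧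
      (∀ x y, dist (Φ x) (Φ y) ≤ 9 * C + 2 * C * N.nrm (x - y)) ∧
      ∀ x y, N.pdist x y ≤ 1 → dist (Φ x) (Φ y) ^ 2 ≤ 512 * C ^ 2 * N.pdist x y := by
  let _ := N.chainPseudoMetric
  obtain ⟨Φ, hclose, hhol⟩ := exists_dist_le_and_sq_dist_le (N.dist_le_chainDist hT) le_rfl
  refine ⟨Φ, hclose, fun x y => ?_, fun x y hxy => ?_⟩
  · have hC : 0 ≤ C := by simpa using hT x x (by simp [pdist_self])
    have hD := N.chainDist_le_nrm_add_two x y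
    have h4 := dist_triangle4 (Φ x) (T x) (T y) (Φ y)
    rw [dist_comm (T y)] at h4
    nlinarith [hclose x, hclose y, N.dist_le_chainDist hT x y]
  · have hD := N.chainDist_le_pdist hxy
    have := hhol x y (hD.trans hxy)
    change _ ≤ 32 * (16 * C ^ 2) * N.chainDist x y at this
    nlinarith [sq_nonneg C]

section Embedding

variable {H : Type*} [NormedAddCommGroup H] [NormedSpace ℝ H] {F : X → H}
  {S : X → lp (fun _ : ℕ => H) 2} {A B : ℝ}

lemma norm_multiscale_sub_le (hA : 0 ≤ A) (hB : 0 ≤ B)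
    (hF : ∀ x y, dist (F x) (F y) ≤ A + B * N.nrm (x - y)) (x y : X) (n : ℕ) :
    ‖multiscale p F x n - multiscale p F y n‖ ≤ 2⁻¹ ^ n * (A + B * N.nrm (x - y)) := by
  rw [norm_multiscale_sub]
  refine le_trans ?_ (weight_mul_le hA hB (N.nrm_nonneg _) p n)
  rw [← N.nrm_scale_smul_sub]
  exact mul_le_mul_of_nonneg_left (hF _ _) (weight_pos p n).le

lemma memℓp_multiscale (hA : 0 ≤ A) (hB : 0 ≤ B)
    (hF : ∀ x y, dist (F x) (F y) ≤ A + B * N.nrm (x - y)) (x : X) :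
    Memℓp (multiscale p F x) 2 :=
  memℓp_two_of_norm_le_geometric fun n => by
    simpa [multiscale] using N.norm_multiscale_sub_le hA hB hF x 0 n

lemma dist_le_of_multiscale (hS : ∀ x, ⇑(S x) = multiscale p F x) (hA : 0 ≤ A) (hB : 0 ≤ B)
    (hF : ∀ x y, dist (F x) (F y) ≤ A + B * N.nrm (x - y)) (x y : X) :
    dist (S x) (S y) ≤ 2 * (A + B * N.nrm (x - y)) := by
  rw [dist_eq_norm]
  refine lp.norm_le_of_norm_le_geometric _ (by have := N.nrm_nonneg (x - y); positivity)
    fun n => ?_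
  rw [lp.coeFn_sub, Pi.sub_apply, hS, hS]
  exact N.norm_multiscale_sub_le hA hB hF x y n

lemma sq_norm_multiscale_sub_le_min (hA : 0 ≤ A) (hB : 0 ≤ B) {K : ℝ}
    (hF : ∀ x y, dist (F x) (F y) ≤ A + B * N.nrm (x - y))
    (hK : ∀ x y, N.pdist x y ≤ 1 → dist (F x) (F y) ^ 2 ≤ K * N.pdist x y)
    {x y : X} (hxy : N.pdist x y ≤ 1) (n : ℕ) :
    ‖multiscale p F x n - multiscale p F y n‖ ^ 2 ≤
      min (max K ((A + B) ^ 2) * 2 ^ n * N.pdist x y) ((A + B) ^ 2 * 4⁻¹ ^ n) := by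
  have hd := N.pdist_nonneg x y
  have hgeo : ‖multiscale p F x n - multiscale p F y n‖ ^ 2 ≤ (A + B) ^ 2 * 4⁻¹ ^ n := by
    have hAB : A + B * N.nrm (x - y) ≤ A + B := by
      nlinarith [N.nrm_le_one_of_pdist_le_one hxy]
    rw [mul_comm, ← sq_geometric_eq]
    exact pow_le_pow_left₀ (norm_nonneg _)
      ((N.norm_multiscale_sub_le hA hB hF x y n).trans (by gcongr)) 2
  refine le_min ?_ hgeo
  rcases le_or_gt (2 ^ n * N.pdist x y) 1 with hsmall | hlarge
  · have hhol := hK _ _ ((N.pdist_scale_smul n x y).trans_le hsmall)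
    rw [pdist_scale_smul] at hhol
    rw [norm_multiscale_sub]
    calc (weight p n * dist (F (scale p n • x)) (F (scale p n • y))) ^ 2
        ≤ dist (F (scale p n • x)) (F (scale p n • y)) ^ 2 :=
          pow_le_pow_left₀ (by positivity [weight_pos p n])
            (mul_le_of_le_one_left dist_nonneg (weight_le_one p n)) 2
      _ ≤ K * (2 ^ n * N.pdist x y) := hhol
      _ ≤ max K ((A + B) ^ 2) * 2 ^ n * N.pdist x y := by
        rw [mul_assoc]; gcongr; exact le_max_left _ _
  · calc ‖multiscale p F x n - multiscale p F y n‖ ^ 2 ≤ (A + B) ^ 2 * 4⁻¹ ^ n := hgeo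
      _ ≤ (A + B) ^ 2 * 1 := by gcongr; exact pow_le_one₀ (by norm_num) (by norm_num)
      _ ≤ max K ((A + B) ^ 2) * (2 ^ n * N.pdist x y) := by
        gcongr
        exact le_max_right _ _
      _ = max K ((A + B) ^ 2) * 2 ^ n * N.pdist x y := by ring

lemma uniformContinuous_of_multiscale (hS : ∀ x, ⇑(S x) = multiscale p F x) (hA : 0 ≤ A)
    (hB : 0 ≤ B) {K : ℝ} (hF : ∀ x y, dist (F x) (F y) ≤ A + B * N.nrm (x - y))
    (hK : ∀ x y, N.pdist x y ≤ 1 → dist (F x) (F y) ^ 2 ≤ K * N.pdist x y) :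
    ∀ ε > (0 : ℝ), ∃ δ > (0 : ℝ), ∀ x y, N.pdist x y < δ → dist (S x) (S y) < ε := by
  intro ε hε
  set K' := max K ((A + B) ^ 2)
  have hK' : 0 ≤ K' := le_max_of_le_right (sq_nonneg _)
  obtain ⟨δ, hδ, hφ⟩ := Metric.tendsto_nhdsWithin_nhds.1
    (tendsto_tsum_min_geometric hK' (sq_nonneg (A + B))) (ε ^ 2) (by positivity)
  refine ⟨min δ 1, by positivity, fun x y hxy => ?_⟩
  have hd := N.pdist_nonneg x y
  have hφxy := hφ (mem_Ici.2 hd) (by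
    rw [Real.dist_0_eq_abs, abs_of_nonneg hd]; exact hxy.trans_le (min_le_left _ _))
  have hsum : Summable fun n : ℕ => min (K' * 2 ^ n * N.pdist x y) ((A + B) ^ 2 * 4⁻¹ ^ n) :=
    ((summable_geometric_of_lt_one (by norm_num) (by norm_num)).mul_left _).of_nonneg_of_le
      (fun n => le_min (by positivity) (by positivity)) fun n => min_le_right _ _
  have hsq := lp.norm_sq_le_tsum (S x - S y) hsum fun n => by
    rw [lp.coeFn_sub, Pi.sub_apply, hS, hS]
    exact N.sq_norm_multiscale_sub_le_min hA hB hF hK (hxy.le.trans (min_le_right _ _)) n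
  rw [dist_eq_norm]
  exact lt_of_pow_lt_pow_left₀ 2 hε.le (hsq.trans_lt ((le_abs_self _).trans_lt
    (by simpa using hφxy)))

lemma uniformContinuous_inv_of_multiscale (hS : ∀ x, ⇑(S x) = multiscale p F x) {ρ : ℝ → ℝ}
    (hρ : Tendsto ρ atTop atTop) (hF : ∀ x y, ρ (N.pdist x y) ≤ dist (F x) (F y)) :
    ∀ ε > (0 : ℝ), ∃ δ > (0 : ℝ), ∀ x y, dist (S x) (S y) < δ → N.pdist x y < ε := by
  intro ε hε
  obtain ⟨s₀, hs₀⟩ := eventually_atTop.1 (hρ.eventually_ge_atTop 1)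
  obtain ⟨n, hn⟩ := pow_unbounded_of_one_lt (s₀ / ε) one_lt_two
  refine ⟨weight p n, weight_pos p n, fun x y hxy => ?_⟩
  by_contra! hεxy
  -- at scale `n` the points are `ρ`-far apart, so coordinate `n` alone is at least `weight p n`
  have hfar : s₀ ≤ N.pdist (scale p n • x) (scale p n • y) := by
    rw [N.pdist_scale_smul]
    rw [div_lt_iff₀ hε] at hn
    nlinarith [pow_pos (two_pos : (0 : ℝ) < 2) n]
  have h1 := (hs₀ _ hfar).trans (hF _ _)
  have := weight_mul_dist_le_dist hS x y n
  nlinarith [weight_pos p n]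

lemma isCoarseEmb_of_multiscale (hS : ∀ x, ⇑(S x) = multiscale p F x) (hA : 0 ≤ A)
    (hB : 0 ≤ B) {ρ : ℝ → ℝ} (hρ_mono : MonotoneOn ρ (Ici 0)) (hρ : Tendsto ρ atTop atTop)
    (h_lower : ∀ x y, ρ (N.pdist x y) ≤ dist (F x) (F y))
    (h_upper : ∀ x y, dist (F x) (F y) ≤ A + B * N.nrm (x - y)) :
    IsCoarseEmb N.pdist (fun u v => dist u v) S := by
  refine ⟨fun t => max 0 (ρ t / 2), fun t => 2 * (A + B * t ^ p⁻¹),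
    fun s hs t ht hst => max_le_max le_rfl (by linarith [hρ_mono hs ht hst]),
    fun s hs t ht hst => ?_, fun _ _ => le_max_left _ _, fun t ht => by positivity,
    tendsto_atTop_mono (fun _ => le_max_right _ _) (hρ.atTop_div_const two_pos),
    fun x y => ⟨max_le dist_nonneg ?_, ?_⟩⟩
  · dsimp only
    gcongr
    exact inv_nonneg.2 N.exponent_pos.le
  · have h0 := weight_mul_dist_le_dist hS x y 0
    simp only [scale_zero, one_smul, weight_zero] at h0
    linarith [h_lower x y]
  · dsimp only
    rw [N.pdist_rpow_inv]
    exact N.dist_le_of_multiscale hS hA hB h_upper x y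

theorem exists_isCoarseEmb_and_isUnifEmb {ρ : ℝ → ℝ} {K : ℝ} (hA : 0 ≤ A) (hB : 0 ≤ B)
    (hρ_mono : MonotoneOn ρ (Ici 0)) (hρ : Tendsto ρ atTop atTop)
    (h_lower : ∀ x y, ρ (N.pdist x y) ≤ dist (F x) (F y))
    (h_upper : ∀ x y, dist (F x) (F y) ≤ A + B * N.nrm (x - y))
    (h_holder : ∀ x y, N.pdist x y ≤ 1 → dist (F x) (F y) ^ 2 ≤ K * N.pdist x y) :
    ∃ S : X → lp (fun _ : ℕ => H) 2,
      IsCoarseEmb N.pdist (fun u v => dist u v) S ∧ IsUnifEmb N.pdist (fun u v => dist u v) S := by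
  let S : X → lp (fun _ : ℕ => H) 2 := fun x => ⟨_, N.memℓp_multiscale hA hB h_upper x⟩
  have hS : ∀ x, ⇑(S x) = multiscale p F x := fun _ => rfl
  have hinv := N.uniformContinuous_inv_of_multiscale hS hρ h_lower
  have hinj : Function.Injective S := fun x y hxy => by
    by_contra hne
    obtain ⟨δ, hδ, h⟩ := hinv _ ((N.pdist_nonneg x y).lt_of_ne (Ne.symm (mt N.pdist_eq_zero.1 hne)))
    exact lt_irrefl _ (h x y (by rwa [hxy, dist_self]))
  exact ⟨S, N.isCoarseEmb_of_multiscale hS hA hB hρ_mono hρ h_lower h_upper, hinj,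
    N.uniformContinuous_of_multiscale hS hA hB h_upper h_holder, hinv⟩

end Embedding

end PNorm

end

theorem coarse_implies_strong_uniform_general
    (p : ℝ) (hp0 : 0 < p)
    (X : Type u) [AddCommGroup X] [Module ℝ X] (nrm : X → ℝ)
    (hnrm_nonneg : ∀ x, 0 ≤ nrm x)
    (hnrm_zero : ∀ x, nrm x = 0 ↔ x = 0)
    (hnrm_smul : ∀ (a : ℝ) (x : X), nrm (a • x) = |a| * nrm x)
    (hnrm_tri : ∀ x y, nrm (x + y) ^ p ≤ nrm x ^ p + nrm y ^ p)
    (hcoarse : ∃ (H : Type u) (_ : NormedAddCommGroup H) (_ : InnerProductSpace ℝ H)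
      (_ : CompleteSpace H) (T : X → H),
      IsCoarseEmb (fun x y => nrm (x - y) ^ p) (fun u v => dist u v) T) :
    ∃ (H : Type u) (_ : NormedAddCommGroup H) (_ : InnerProductSpace ℝ H)
      (_ : CompleteSpace H) (T : X → H),
      IsCoarseEmb (fun x y => nrm (x - y) ^ p) (fun u v => dist u v) T ∧
      IsUnifEmb (fun x y => nrm (x - y) ^ p) (fun u v => dist u v) T := by
  obtain ⟨H, _, _, _, T, ρ₁, ρ₂, hρ₁_mono, hρ₂_mono, -, hρ₂_nonneg, hρ₁, hT⟩ := hcoarse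
  let N : PNorm p X := ⟨nrm, hp0, hnrm_nonneg, hnrm_zero, hnrm_smul, hnrm_tri⟩
  set C := ρ₂ 2
  have hC : 0 ≤ C := hρ₂_nonneg 2 zero_le_two
  obtain ⟨Φ, hclose, h_upper, h_holder⟩ := N.exists_regularization (T := T) (C := C)
    fun x y h => (hT x y).2.trans (hρ₂_mono (N.pdist_nonneg x y) (mem_Ici.2 zero_le_two) h)
  have h_lower : ∀ x y, ρ₁ (N.pdist x y) - 4 * C ≤ dist (Φ x) (Φ y) := fun x y => by
    have h1 : ρ₁ (N.pdist x y) ≤ dist (T x) (T y) := (hT x y).1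
    have h4 := dist_triangle4 (T x) (Φ x) (Φ y) (T y)
    rw [dist_comm (T x) (Φ x)] at h4
    linarith [hclose x, hclose y]
  obtain ⟨S, hS⟩ := N.exists_isCoarseEmb_and_isUnifEmb (by positivity) (by positivity)
    (fun s hs t ht hst => by linarith [hρ₁_mono hs ht hst])
    (tendsto_atTop_add_const_right _ _ hρ₁) h_lower h_upper h_holder
  exact ⟨_, inferInstance, inferInstance, inferInstance, S, hS⟩

/-- If a `p`-normed space (with the metric `d(x,y) = ‖x - y‖ ^ p`) coarsely embeds into a
real Hilbert space, then it strongly uniformly embeds into a real Hilbert space. -/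
theorem coarse_implies_strong_uniform
    (p : ℝ) (hp0 : 0 < p) (hp1 : p ≤ 1)
    (X : Type u) [AddCommGroup X] [Module ℝ X] (nrm : X → ℝ)
    (hnrm_nonneg : ∀ x, 0 ≤ nrm x)
    (hnrm_zero : ∀ x, nrm x = 0 ↔ x = 0)
    (hnrm_smul : ∀ (a : ℝ) (x : X), nrm (a • x) = |a| * nrm x)
    (hnrm_tri : ∀ x y, nrm (x + y) ^ p ≤ nrm x ^ p + nrm y ^ p)
    (hcoarse : ∃ (H : Type u) (_ : NormedAddCommGroup H) (_ : InnerProductSpace ℝ H)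
      (_ : CompleteSpace H) (T : X → H),
      IsCoarseEmb (fun x y => nrm (x - y) ^ p) (fun u v => dist u v) T) :
    ∃ (H : Type u) (_ : NormedAddCommGroup H) (_ : InnerProductSpace ℝ H)
      (_ : CompleteSpace H) (T : X → H),
      IsCoarseEmb (fun x y => nrm (x - y) ^ p) (fun u v => dist u v) T ∧
      IsUnifEmb (fun x y => nrm (x - y) ^ p) (fun u v => dist u v) T :=
  coarse_implies_strong_uniform_general p hp0 X nrm hnrm_nonneg hnrm_zero hnrm_smul hnrm_tri hcoarse
end

section
/- Let 0 < p ≤ 1 and let X be a p-normed space, regarded as a metric space with d(x,y) = ‖x−y‖^p. If X uniformly embeds into a real Hilbert space, then X coarsely embeds into a real Hilbert space. -/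
open Filter Set

universe u

/-!
Rescale the uniform embedding `T` by dilations, `T_k x = T (c_k ^ (1/p) • x)` with
`c_k = min(δ_k, 1) / (k + 1)`, where `δ_k` is the modulus of uniform continuity of `T` at
`2 ^ (-k)`; the dilation multiplies `d` by `c_k`. Cutting a segment into `n` pieces of size `d / n ^ p` shows
that every `T_k` is bounded at all scales by `ω(d) = (d / δ_0) ^ (1/p) + 1`; on `d < k + 1` it
moves points by at most `2 ^ (-k)`; and uniform continuity of `T⁻¹` gives `θ > 0` with
`θ ≤ dist (T_k x) (T_k y)` once `1 ≤ c_k d`. Hence `x ↦ (T_k x - T_k 0)_k ∈ ℓ²` has squared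
distances at most `d ω(d) ^ 2 + 2` and at least `θ ^ 2` times the number of `k` with `c_k⁻¹ ≤ d`,
which tends to infinity with `d`.
-/

theorem summable_and_tsum_le_of_le_geometric {a : ℕ → ℝ} {M r : ℝ} (N : ℕ) (ha : ∀ k, 0 ≤ a k)
    (hM : ∀ k < N, a k ≤ M) (hr0 : 0 ≤ r) (hr1 : r < 1) (htail : ∀ k, N ≤ k → a k ≤ r ^ k) :
    Summable a ∧ ∑' k, a k ≤ N * M + (1 - r)⁻¹ := by
  have hsum_le : ∀ F : Finset ℕ, ∑ k ∈ F, a k ≤ N * M + (1 - r)⁻¹ := by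
    intro F
    rw [← Finset.sum_filter_add_sum_filter_not F (· < N)]
    gcongr
    · calc ∑ k ∈ F with k < N, a k
          ≤ ∑ k ∈ Finset.range N, a k :=
            Finset.sum_le_sum_of_subset_of_nonneg (fun k hk => by simp_all)
              fun k _ _ => ha k
        _ ≤ ∑ _k ∈ Finset.range N, M := Finset.sum_le_sum fun k hk => hM k (by simpa using hk)
        _ = N * M := by simp
    · calc ∑ k ∈ F with ¬k < N, a k
          ≤ ∑ k ∈ F with ¬k < N, r ^ k :=
            Finset.sum_le_sum fun k hk => htail k (by simp_all)
        _ ≤ ∑' k, r ^ k :=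
            (summable_geometric_of_lt_one hr0 hr1).sum_le_tsum _ fun k _ => by positivity
        _ = (1 - r)⁻¹ := tsum_geometric_of_lt_one hr0 hr1
  exact ⟨summable_of_sum_le ha hsum_le, Real.tsum_le_of_sum_le ha hsum_le⟩

noncomputable def countBelow (b : ℕ → ℝ) (s : ℝ) : ℕ :=
  ((Finset.range (⌊s⌋₊ + 1)).filter (fun k => b k ≤ s)).card

theorem countBelow_mono (b : ℕ → ℝ) : Monotone (countBelow b) := by
  intro s s' hss'
  apply Finset.card_le_card
  intro k hk
  simp only [Finset.mem_filter, Finset.mem_range] at hk ⊢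
  exact ⟨hk.1.trans_le (by gcongr), hk.2.trans hss'⟩

theorem tendsto_countBelow (b : ℕ → ℝ) : Tendsto (countBelow b) atTop atTop := by
  refine tendsto_atTop.2 fun K => ?_
  have hrange : ∀ᶠ s in atTop, ∀ k ∈ Finset.range K,
      k ∈ (Finset.range (⌊s⌋₊ + 1)).filter (fun k => b k ≤ s) := by
    refine (Filter.eventually_all_finset _).2 fun k _ => ?_
    filter_upwards [eventually_ge_atTop (max (k : ℝ) (b k))] with s hs
    simp only [Finset.mem_filter, Finset.mem_range, max_le_iff] at hs ⊢
    exact ⟨Nat.lt_succ_of_le (Nat.le_floor hs.1), hs.2⟩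
  filter_upwards [hrange] with s hs
  simpa [countBelow] using Finset.card_le_card hs

section LpGlue

variable {α E : Type*} [NormedAddCommGroup E]

noncomputable def lpGlue (f : ℕ → α → E) (x₀ : α)
    (hf : ∀ x, Summable fun k => dist (f k x) (f k x₀) ^ 2) (x : α) : lp (fun _ : ℕ => E) 2 :=
  ⟨fun k => f k x - f k x₀, memℓp_gen (by simpa [dist_eq_norm] using hf x)⟩

theorem dist_lpGlue_sq (f : ℕ → α → E) (x₀ : α)
    (hf : ∀ x, Summable fun k => dist (f k x) (f k x₀) ^ 2) (x y : α) :
    dist (lpGlue f x₀ hf x) (lpGlue f x₀ hf y) ^ 2 = ∑' k, dist (f k x) (f k y) ^ 2 := by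
  have h := lp.norm_rpow_eq_tsum (p := 2) (by norm_num) (lpGlue f x₀ hf x - lpGlue f x₀ hf y)
  simp only [ENNReal.toReal_ofNat, Real.rpow_two, lp.coeFn_sub, Pi.sub_apply] at h
  simpa [dist_eq_norm, lpGlue] using h

theorem isCoarseEmb_lpGlue (d : α → α → ℝ) (hd : ∀ x y, 0 ≤ d x y) (f : ℕ → α → E) (x₀ : α)
    {M : ℝ → ℝ} (hM_mono : MonotoneOn M (Ici 0)) (hM_nonneg : ∀ s, 0 ≤ s → 0 ≤ M s)
    (hfM : ∀ k x y, dist (f k x) (f k y) ≤ M (d x y))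
    (hf_tail : ∀ (k : ℕ) x y, d x y < k + 1 → dist (f k x) (f k y) ≤ (1 / 2) ^ k)
    {b : ℕ → ℝ} {θ : ℝ} (hθ : 0 < θ) (hf_low : ∀ k x y, b k ≤ d x y → θ ≤ dist (f k x) (f k y)) :
    ∃ S : α → lp (fun _ : ℕ => E) 2, IsCoarseEmb d dist S := by
  have hsq : ∀ x y, Summable (fun k => dist (f k x) (f k y) ^ 2) ∧
      ∑' k, dist (f k x) (f k y) ^ 2 ≤ ⌊d x y⌋₊ * M (d x y) ^ 2 + (1 - (1 / 2) ^ 2)⁻¹ := by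
    intro x y
    refine summable_and_tsum_le_of_le_geometric _ (fun k => by positivity)
      (fun k _ => pow_le_pow_left₀ dist_nonneg (hfM k x y) 2) (by norm_num) (by norm_num)
      fun k hk => ?_
    rw [← pow_right_comm]
    refine pow_le_pow_left₀ dist_nonneg (hf_tail k x y ?_) 2
    exact (Nat.lt_floor_add_one _).trans_le (by gcongr)
  refine ⟨lpGlue f x₀ fun x => (hsq x x₀).1, fun s => θ * √(countBelow b s),
    fun s => √(s * M s ^ 2 + 2), fun s _ s' _ hss' => ?_, fun s hs s' hs' hss' => ?_,
    fun s _ => by positivity, fun s _ => by positivity,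
    (Real.tendsto_sqrt_atTop.comp
      (tendsto_natCast_atTop_atTop.comp (tendsto_countBelow b))).const_mul_atTop hθ,
    fun x y => ⟨?_, ?_⟩⟩
  · dsimp only
    gcongr
    exact countBelow_mono b hss'
  · have := hM_nonneg s hs
    dsimp only
    gcongr
    exact hM_mono hs hs' hss'
  · set F := (Finset.range (⌊d x y⌋₊ + 1)).filter (fun k => b k ≤ d x y)
    dsimp only
    rw [← Real.sqrt_sq dist_nonneg, dist_lpGlue_sq, ← Real.sqrt_sq hθ.le,
      ← Real.sqrt_mul (sq_nonneg _)]
    gcongr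
    calc θ ^ 2 * countBelow b (d x y) = ∑ _k ∈ F, θ ^ 2 := by simp [countBelow, F, mul_comm]
      _ ≤ ∑ k ∈ F, dist (f k x) (f k y) ^ 2 := Finset.sum_le_sum fun k hk =>
          pow_le_pow_left₀ hθ.le (hf_low k x y (Finset.mem_filter.1 hk).2) 2
      _ ≤ ∑' k, dist (f k x) (f k y) ^ 2 := (hsq x y).1.sum_le_tsum _ fun k _ => by positivity
  · dsimp only
    rw [← Real.sqrt_sq dist_nonneg, dist_lpGlue_sq]
    gcongr
    calc ∑' k, dist (f k x) (f k y) ^ 2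
        ≤ ⌊d x y⌋₊ * M (d x y) ^ 2 + (1 - (1 / 2) ^ 2)⁻¹ := (hsq x y).2
      _ ≤ d x y * M (d x y) ^ 2 + 2 := by
          gcongr
          · exact Nat.floor_le (hd x y)
          · norm_num

end LpGlue

section PNormed

variable {X : Type*} [AddCommGroup X] [Module ℝ X] {p : ℝ} {nrm : X → ℝ}

theorem nrm_smul_rpow (hnrm_nonneg : ∀ x, 0 ≤ nrm x)
    (hnrm_smul : ∀ (a : ℝ) (x : X), nrm (a • x) = |a| * nrm x) {t : ℝ} (ht : 0 ≤ t) (x : X) :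
    nrm (t • x) ^ p = t ^ p * nrm x ^ p := by
  rw [hnrm_smul, abs_of_nonneg ht, Real.mul_rpow ht (hnrm_nonneg x)]

theorem dist_le_rpow_add_one_of_lt_one (hp : 0 < p) (hnrm_nonneg : ∀ x, 0 ≤ nrm x)
    (hnrm_smul : ∀ (a : ℝ) (x : X), nrm (a • x) = |a| * nrm x) {E : Type*} [PseudoMetricSpace E]
    {f : X → E} {δ : ℝ} (hδ : 0 < δ) (hf : ∀ x y, nrm (x - y) ^ p < δ → dist (f x) (f y) < 1)
    (u v : X) : dist (f u) (f v) ≤ (nrm (u - v) ^ p / δ) ^ p⁻¹ + 1 := by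
  have hs : 0 ≤ nrm (u - v) ^ p / δ := div_nonneg (Real.rpow_nonneg (hnrm_nonneg _) _) hδ.le
  set n := ⌊(nrm (u - v) ^ p / δ) ^ p⁻¹⌋₊ + 1
  have hn0 : (0 : ℝ) < n := by positivity
  set z : ℕ → X := fun i => u + ((i : ℝ) / n) • (v - u)
  have hstep : ∀ i, nrm (z i - z (i + 1)) ^ p < δ := by
    intro i
    have hz : z i - z (i + 1) = (n : ℝ)⁻¹ • (u - v) := by
      simp only [z]
      push_cast
      module
    rw [hz, nrm_smul_rpow hnrm_nonneg hnrm_smul (inv_nonneg.2 hn0.le), Real.inv_rpow hn0.le,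
      inv_mul_lt_iff₀ (by positivity), ← div_lt_iff₀ hδ]
    exact (Real.rpow_inv_lt_iff_of_pos hs hn0.le hp).1 (by simpa [n] using Nat.lt_floor_add_one _)
  calc dist (f u) (f v) = dist (f (z 0)) (f (z n)) := by simp [z, hn0.ne']
    _ ≤ ∑ i ∈ Finset.range n, dist (f (z i)) (f (z (i + 1))) :=
        dist_le_range_sum_dist (fun i => f (z i)) n
    _ ≤ ∑ _i ∈ Finset.range n, 1 := Finset.sum_le_sum fun i _ => (hf _ _ (hstep i)).le
    _ ≤ (nrm (u - v) ^ p / δ) ^ p⁻¹ + 1 := by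
        simpa [n] using Nat.floor_le (Real.rpow_nonneg hs p⁻¹)

theorem exists_isCoarseEmb_lp (hp : 0 < p) (hnrm_nonneg : ∀ x, 0 ≤ nrm x)
    (hnrm_smul : ∀ (a : ℝ) (x : X), nrm (a • x) = |a| * nrm x) {E : Type*} [NormedAddCommGroup E]
    {T : X → E} (hT : ∀ ε > 0, ∃ δ > 0, ∀ x y, nrm (x - y) ^ p < δ → dist (T x) (T y) < ε)
    (hT_inv : ∀ ε > 0, ∃ δ > 0, ∀ x y, dist (T x) (T y) < δ → nrm (x - y) ^ p < ε) :
    ∃ S : X → lp (fun _ : ℕ => E) 2, IsCoarseEmb (fun x y => nrm (x - y) ^ p) dist S := by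
  obtain ⟨δ₀, hδ₀, hTδ₀⟩ := hT 1 one_pos
  obtain ⟨θ, hθ, hθT⟩ := hT_inv 1 one_pos
  choose δ hδ hTδ using fun k : ℕ => hT ((1 / 2) ^ k) (by positivity)
  set c : ℕ → ℝ := fun k => min (δ k) 1 / (k + 1)
  have hc : ∀ k, 0 < c k := fun k => div_pos (lt_min (hδ k) one_pos) (by positivity)
  have hc_le : ∀ k, c k ≤ 1 := fun k =>
    div_le_one_of_le₀ ((min_le_right _ _).trans (by simp)) (by positivity)
  have hd : ∀ x y, 0 ≤ nrm (x - y) ^ p := fun x y => Real.rpow_nonneg (hnrm_nonneg _) p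
  have hdilate : ∀ k x y, nrm (c k ^ p⁻¹ • x - c k ^ p⁻¹ • y) ^ p = c k * nrm (x - y) ^ p := by
    intro k x y
    rw [← smul_sub, nrm_smul_rpow hnrm_nonneg hnrm_smul (Real.rpow_nonneg (hc k).le _),
      Real.rpow_inv_rpow (hc k).le hp.ne']
  have hM_mono : MonotoneOn (fun s => (s / δ₀) ^ p⁻¹ + 1) (Ici 0) := fun s hs s' _ hss' => by
    have : 0 ≤ s := hs
    dsimp only
    gcongr
  refine isCoarseEmb_lpGlue (b := fun k => (c k)⁻¹) _ hd (fun k x => T (c k ^ p⁻¹ • x)) 0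
    hM_mono (fun s hs => by positivity) (fun k x y => ?_) (fun k x y hxy => ?_) hθ
    (fun k x y hxy => ?_)
  · refine (dist_le_rpow_add_one_of_lt_one hp hnrm_nonneg hnrm_smul hδ₀ hTδ₀ _ _).trans ?_
    rw [hdilate]
    exact hM_mono (mul_nonneg (hc k).le (hd x y)) (hd x y)
      (mul_le_of_le_one_left (hd x y) (hc_le k))
  · refine (hTδ k _ _ ?_).le
    rw [hdilate]
    calc c k * nrm (x - y) ^ p ≤ δ k / (k + 1) * nrm (x - y) ^ p := by
          gcongr
          · exact hd x y
          · exact div_le_div_of_nonneg_right (min_le_left _ _) (by positivity)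
      _ < δ k := by
          rw [div_mul_eq_mul_div, div_lt_iff₀ (by positivity)]
          exact mul_lt_mul_of_pos_left hxy (hδ k)
  · refine le_of_not_gt fun h => (hθT _ _ h).not_ge ?_
    rw [hdilate]
    exact (inv_le_iff_one_le_mul₀' (hc k)).1 hxy

end PNormed

theorem uniform_implies_coarse_general
    (p : ℝ) (hp0 : 0 < p)
    (X : Type u) [AddCommGroup X] [Module ℝ X] (nrm : X → ℝ)
    (hnrm_nonneg : ∀ x, 0 ≤ nrm x)
    (hnrm_smul : ∀ (a : ℝ) (x : X), nrm (a • x) = |a| * nrm x)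
    (hunif : ∃ (H : Type u) (_ : NormedAddCommGroup H) (_ : InnerProductSpace ℝ H)
      (_ : CompleteSpace H) (T : X → H),
      IsUnifEmb (fun x y => nrm (x - y) ^ p) (fun u v => dist u v) T) :
    ∃ (H : Type u) (_ : NormedAddCommGroup H) (_ : InnerProductSpace ℝ H)
      (_ : CompleteSpace H) (T : X → H),
      IsCoarseEmb (fun x y => nrm (x - y) ^ p) (fun u v => dist u v) T := by
  obtain ⟨H, _, _, _, T, -, hT, hT_inv⟩ := hunif
  obtain ⟨S, hS⟩ := exists_isCoarseEmb_lp hp0 hnrm_nonneg hnrm_smul hT hT_inv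
  exact ⟨lp (fun _ : ℕ => H) 2, inferInstance, inferInstance, inferInstance, S, hS⟩

/-- If a `p`-normed space (with the metric `d(x,y) = ‖x - y‖ ^ p`) uniformly embeds into a
real Hilbert space, then it coarsely embeds into a real Hilbert space. -/
theorem uniform_implies_coarse
    (p : ℝ) (hp0 : 0 < p) (hp1 : p ≤ 1)
    (X : Type u) [AddCommGroup X] [Module ℝ X] (nrm : X → ℝ)
    (hnrm_nonneg : ∀ x, 0 ≤ nrm x)
    (hnrm_zero : ∀ x, nrm x = 0 ↔ x = 0)
    (hnrm_smul : ∀ (a : ℝ) (x : X), nrm (a • x) = |a| * nrm x)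
    (hnrm_tri : ∀ x y, nrm (x + y) ^ p ≤ nrm x ^ p + nrm y ^ p)
    (hunif : ∃ (H : Type u) (_ : NormedAddCommGroup H) (_ : InnerProductSpace ℝ H)
      (_ : CompleteSpace H) (T : X → H),
      IsUnifEmb (fun x y => nrm (x - y) ^ p) (fun u v => dist u v) T) :
    ∃ (H : Type u) (_ : NormedAddCommGroup H) (_ : InnerProductSpace ℝ H)
      (_ : CompleteSpace H) (T : X → H),
      IsCoarseEmb (fun x y => nrm (x - y) ^ p) (fun u v => dist u v) T :=
  uniform_implies_coarse_general p hp0 X nrm hnrm_nonneg hnrm_smul hunif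
end

section
/- Let X be a set and let N : X × X → ℂ be a kernel, i.e. N(y,x) = conj(N(x,y)) for all x, y ∈ X. Then N is negative definite if and only if for every t > 0 the kernel (x,y) ↦ exp(−t·N(x,y)) is positive definite. -/
open scoped ComplexOrder

/-- A kernel on `X`: a complex-valued function satisfying `K (y, x) = conj (K (x, y))`. -/
def IsHermKernel {X : Type*} (K : X → X → ℂ) : Prop :=
  ∀ x y, K y x = starRingEnd ℂ (K x y)

/-- A positive definite kernel. -/
def IsPosDefKernelC {X : Type*} (K : X → X → ℂ) : Prop :=
  IsHermKernel K ∧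
  ∀ (n : ℕ) (x : Fin n → X) (c : Fin n → ℂ),
    0 ≤ ∑ i, ∑ j, K (x i) (x j) * c i * starRingEnd ℂ (c j)

/-- A negative definite kernel. -/
def IsNegDefKernelC {X : Type*} (K : X → X → ℂ) : Prop :=
  IsHermKernel K ∧
  ∀ (n : ℕ) (x : Fin n → X) (c : Fin n → ℂ), (∑ i, c i) = 0 →
    ∑ i, ∑ j, K (x i) (x j) * c i * starRingEnd ℂ (c j) ≤ 0

/-!
If `N` is negative definite and `x₀ ∈ X`, the kernel `K(a,b) = N(a,x₀) + N(x₀,b) - N(a,b) - N(x₀,x₀)`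
is positive definite: its quadratic form at `c` is minus that of `N` at the points `x₀, x₁, …, xₙ`
with the coefficients `-∑ cᵢ, c₁, …, cₙ`, which sum to zero. Positive definite kernels are closed
under sums, products (Schur) and pointwise limits, hence under `exp`, and
`exp(-tN(a,b)) = exp(tK(a,b)) g(a) conj(g(b))` with `g(a) = exp(-tN(a,x₀) + tN(x₀,x₀)/2)`.
Conversely, for coefficients summing to zero the quadratic form of `exp(-tN)` vanishes at `t = 0`
and is nonnegative for `t > 0`, so its derivative `-∑ N(xᵢ,xⱼ) cᵢ conj(cⱼ)` at `0` is nonnegative.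
-/

open Finset Filter Topology Matrix

section

variable {X : Type*}

def kernelMatrix (K : X → X → ℂ) {n : ℕ} (x : Fin n → X) : Matrix (Fin n) (Fin n) ℂ :=
  Matrix.of fun i j => K (x i) (x j)

lemma star_dotProduct_kernelMatrix_mulVec (K : X → X → ℂ) {n : ℕ} (x : Fin n → X)
    (v : Fin n → ℂ) :
    star v ⬝ᵥ (kernelMatrix K x *ᵥ v) =
      ∑ i, ∑ j, K (x i) (x j) * star v i * starRingEnd ℂ (star v j) := by
  simp only [dotProduct, mulVec, kernelMatrix, of_apply, mul_sum, Pi.star_apply,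
    RCLike.star_def, Complex.conj_conj]
  exact sum_congr rfl fun i _ => sum_congr rfl fun j _ => by ring

lemma isPosDefKernelC_iff_posSemidef {K : X → X → ℂ} :
    IsPosDefKernelC K ↔ ∀ (n : ℕ) (x : Fin n → X), (kernelMatrix K x).PosSemidef := by
  constructor
  · rintro ⟨hK, hQ⟩ n x
    refine .of_dotProduct_mulVec_nonneg ?_ fun v => ?_
    · ext i j
      simp [kernelMatrix, hK (x i) (x j)]
    · rw [star_dotProduct_kernelMatrix_mulVec]
      exact hQ n x (star v)
  · intro h
    refine ⟨fun a b => ?_, fun n x c => ?_⟩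
    · simpa [kernelMatrix] using (congrFun₂ (h 2 ![a, b]).isHermitian 1 0).symm
    · have hc := (h n x).dotProduct_mulVec_nonneg (star c)
      rwa [star_dotProduct_kernelMatrix_mulVec, star_star] at hc

namespace IsPosDefKernelC

lemma posSemidef {K : X → X → ℂ} (hK : IsPosDefKernelC K) {n : ℕ} (x : Fin n → X) :
    (kernelMatrix K x).PosSemidef :=
  isPosDefKernelC_iff_posSemidef.mp hK n x

lemma of_posSemidef {K : X → X → ℂ}
    (h : ∀ (n : ℕ) (x : Fin n → X), (kernelMatrix K x).PosSemidef) : IsPosDefKernelC K :=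
  isPosDefKernelC_iff_posSemidef.mpr h

lemma of_isEmpty [IsEmpty X] (K : X → X → ℂ) : IsPosDefKernelC K := by
  refine ⟨isEmptyElim, fun n x c => ?_⟩
  have : IsEmpty (Fin n) := ⟨fun i => isEmptyElim (x i)⟩
  simp

lemma mul_conj_self (f : X → ℂ) : IsPosDefKernelC fun a b => f a * starRingEnd ℂ (f b) :=
  of_posSemidef fun _ x => by
    simpa [kernelMatrix, Matrix.vecMulVec] using Matrix.posSemidef_vecMulVec_self_star (f ∘ x)

lemma one : IsPosDefKernelC fun (_ _ : X) => (1 : ℂ) := by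
  simpa using mul_conj_self (X := X) 1

lemma const_mul {K : X → X → ℂ} (hK : IsPosDefKernelC K) {r : ℂ} (hr : 0 ≤ r) :
    IsPosDefKernelC fun a b => r * K a b :=
  of_posSemidef fun _ x => (hK.posSemidef x).smul hr

lemma sum {ι : Type*} {K : ι → X → X → ℂ} (s : Finset ι) (hK : ∀ i ∈ s, IsPosDefKernelC (K i)) :
    IsPosDefKernelC (∑ i ∈ s, K i) :=
  of_posSemidef fun _ x => by
    convert posSemidef_sum s fun i hi => (hK i hi).posSemidef x
    ext
    simp [kernelMatrix, Matrix.sum_apply]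

lemma mul {A B : X → X → ℂ} (hA : IsPosDefKernelC A) (hB : IsPosDefKernelC B) :
    IsPosDefKernelC (A * B) :=
  of_posSemidef fun _ x => (hA.posSemidef x).hadamard (hB.posSemidef x)

lemma pow {K : X → X → ℂ} (hK : IsPosDefKernelC K) (k : ℕ) : IsPosDefKernelC (K ^ k) := by
  induction k with
  | zero => exact one
  | succ k ih => rw [pow_succ]; exact ih.mul hK

lemma of_tendsto {ι : Type*} {l : Filter ι} [l.NeBot] {F : ι → X → X → ℂ} {K : X → X → ℂ}
    (hF : ∀ i, IsPosDefKernelC (F i)) (hlim : ∀ a b, Tendsto (fun i => F i a b) l (𝓝 (K a b))) :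
    IsPosDefKernelC K := by
  refine ⟨fun a b => ?_, fun n x c => ?_⟩
  · refine tendsto_nhds_unique (hlim b a) ?_
    simpa only [(hF _).1 a b, Function.comp_def] using
      (Complex.continuous_conj.tendsto _).comp (hlim a b)
  · have hsum := tendsto_finsetSum univ fun i _ => tendsto_finsetSum univ fun j _ =>
      ((hlim (x i) (x j)).mul_const (c i)).mul_const (starRingEnd ℂ (c j))
    exact ge_of_tendsto' hsum fun i => (hF i).2 n x c

lemma exp {K : X → X → ℂ} (hK : IsPosDefKernelC K) :
    IsPosDefKernelC fun a b => Complex.exp (K a b) := by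
  refine of_tendsto (F := fun m => ∑ k ∈ range m, fun a b => ((k.factorial : ℂ))⁻¹ * K a b ^ k)
    (l := atTop) (fun m => sum _ fun k _ => (hK.pow k).const_mul ?_) fun a b => ?_
  · positivity
  · simpa [Complex.exp_eq_exp_ℂ, div_eq_inv_mul] using
      (NormedSpace.expSeries_div_hasSum_exp (K a b)).tendsto_sum_nat

end IsPosDefKernelC

def reducedKernel (N : X → X → ℂ) (x₀ : X) (a b : X) : ℂ :=
  N a x₀ + N x₀ b - N a b - N x₀ x₀

lemma sum_reducedKernel_mul (N : X → X → ℂ) (x₀ : X) {n : ℕ} (x : Fin n → X) (c : Fin n → ℂ) :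
    ∑ i, ∑ j, reducedKernel N x₀ (x i) (x j) * c i * starRingEnd ℂ (c j) =
      -∑ i, ∑ j, N (vecCons x₀ x i) (vecCons x₀ x j) * vecCons (-∑ k, c k) c i *
        starRingEnd ℂ (vecCons (-∑ k, c k) c j) := by
  simp only [Fin.sum_univ_succ, cons_val_zero, cons_val_succ, reducedKernel, add_mul, sub_mul,
    sum_add_distrib, sum_sub_distrib, map_neg, map_sum, mul_sum, sum_mul, mul_neg, neg_mul,
    sum_neg_distrib]
  rw [sum_comm (f := fun j i => N x₀ x₀ * c i * starRingEnd ℂ (c j)),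
    sum_comm (f := fun j i => N x₀ (x j) * c i * starRingEnd ℂ (c j))]
  ring

lemma IsHermKernel.reducedKernel {N : X → X → ℂ} (hN : IsHermKernel N) (x₀ : X) :
    IsHermKernel (reducedKernel N x₀) := by
  intro a b
  have hconj : ∀ x y, starRingEnd ℂ (N x y) = N y x := fun x y => (hN x y).symm
  simp only [_root_.reducedKernel, map_sub, map_add, hconj]
  ring

lemma IsNegDefKernelC.isPosDefKernelC_reducedKernel {N : X → X → ℂ} (hN : IsNegDefKernelC N)
    (x₀ : X) : IsPosDefKernelC (reducedKernel N x₀) := by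
  refine ⟨hN.1.reducedKernel x₀, fun n x c => ?_⟩
  rw [sum_reducedKernel_mul, neg_nonneg]
  exact hN.2 _ _ _ (by simp [Fin.sum_univ_succ])

lemma exp_neg_mul_eq_exp_reducedKernel {N : X → X → ℂ} (hN : IsHermKernel N) (x₀ : X) (t : ℝ)
    (a b : X) :
    Complex.exp (-(t : ℂ) * N a b) =
      Complex.exp (t * reducedKernel N x₀ a b) *
        (Complex.exp (-(t : ℂ) * N a x₀ + t * N x₀ x₀ / 2) *
          starRingEnd ℂ (Complex.exp (-(t : ℂ) * N b x₀ + t * N x₀ x₀ / 2))) := by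
  have hconj : ∀ x y, starRingEnd ℂ (N x y) = N y x := fun x y => (hN x y).symm
  simp only [← Complex.exp_conj, ← Complex.exp_add, map_add, map_mul, map_neg, map_div₀,
    Complex.conj_ofReal, hconj, map_ofNat, _root_.reducedKernel]
  ring_nf

lemma IsNegDefKernelC.isPosDefKernelC_exp_neg_mul {N : X → X → ℂ} (hN : IsNegDefKernelC N)
    {t : ℝ} (ht : 0 ≤ t) : IsPosDefKernelC fun a b => Complex.exp (-(t : ℂ) * N a b) := by
  rcases isEmpty_or_nonempty X with hX | ⟨⟨x₀⟩⟩
  · exact .of_isEmpty _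
  have hexp := ((hN.isPosDefKernelC_reducedKernel x₀).const_mul
    (Complex.zero_le_real.mpr ht)).exp
  convert hexp.mul (.mul_conj_self _) using 1
  funext a b
  exact exp_neg_mul_eq_exp_reducedKernel hN.1 x₀ t a b

lemma HasDerivAt.nonneg_of_eq_zero_of_nonneg {E : Type*} [NormedAddCommGroup E] [NormedSpace ℝ E]
    [PartialOrder E] [OrderClosedTopology E] [PosSMulMono ℝ E] {f : ℝ → E} {f' : E}
    (hf : HasDerivAt f f' 0) (h0 : f 0 = 0) (hpos : ∀ t, 0 < t → 0 ≤ f t) : 0 ≤ f' := by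
  have hslope := hf.tendsto_slope_zero_right
  simp only [zero_add, h0, sub_zero] at hslope
  exact ge_of_tendsto hslope <| eventually_nhdsWithin_of_forall fun t ht =>
    smul_nonneg (inv_nonneg.mpr ht.le) (hpos t ht)

lemma hasDerivAt_exp_neg_mul (z : ℂ) :
    HasDerivAt (fun t : ℝ => Complex.exp (-(t : ℂ) * z)) (-z) 0 := by
  simpa using ((hasDerivAt_id (0 : ℝ)).ofReal_comp.neg.mul_const z).cexp

lemma IsNegDefKernelC.of_isPosDefKernelC_exp_neg_mul {N : X → X → ℂ} (hN : IsHermKernel N)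
    (hexp : ∀ t : ℝ, 0 < t → IsPosDefKernelC fun a b => Complex.exp (-(t : ℂ) * N a b)) :
    IsNegDefKernelC N := by
  refine ⟨hN, fun n x c hc => ?_⟩
  have hderiv : HasDerivAt
      (fun t : ℝ => ∑ i, ∑ j, Complex.exp (-(t : ℂ) * N (x i) (x j)) * c i * starRingEnd ℂ (c j))
      (∑ i, ∑ j, -N (x i) (x j) * c i * starRingEnd ℂ (c j)) 0 :=
    HasDerivAt.fun_sum fun i _ => HasDerivAt.fun_sum fun j _ =>
      ((hasDerivAt_exp_neg_mul _).mul_const _).mul_const _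
  have h0 : ∑ i, ∑ j, Complex.exp (-((0 : ℝ) : ℂ) * N (x i) (x j)) * c i * starRingEnd ℂ (c j)
      = 0 := by
    simp [← mul_sum, ← sum_mul, hc]
  have hnonneg := hderiv.nonneg_of_eq_zero_of_nonneg h0 fun t ht => (hexp t ht).2 n x c
  simpa [sum_neg_distrib] using hnonneg

end

/-- Schoenberg's theorem: a kernel `N` on a set `X` is negative definite if and only if
`exp (-t • N)` is positive definite for every `t > 0`. -/
theorem negDef_iff_exp_posDef {X : Type*} (N : X → X → ℂ) (hN : IsHermKernel N) :
    IsNegDefKernelC N ↔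
      ∀ t : ℝ, 0 < t → IsPosDefKernelC (fun x y => Complex.exp (-(t : ℂ) * N x y)) :=
  ⟨fun hNeg _ ht => hNeg.isPosDefKernelC_exp_neg_mul ht.le,
    IsNegDefKernelC.of_isPosDefKernelC_exp_neg_mul hN⟩
end

section
/- Let X be a set and let K : X × X → ℝ be a symmetric function. Then K is a positive definite kernel if and only if there exist a real Hilbert space H and a mapping T : X → H such that K(x,y) = ⟨T(x), T(y)⟩ for all x, y ∈ X. -/
/-!
A Gram kernel `⟪T x, T y⟫` is positive definite because its quadratic form is
`‖∑ cᵢ • T xᵢ‖²`. Conversely, a positive definite kernel is the Gram kernel of its kernel sections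
`x ↦ K(·, x)` in the reproducing kernel Hilbert space it generates (Moore's theorem). Mathlib
constructs that space for operator-valued kernels, so the real kernel `K` is fed to it as the
matrix of scalar operators `K x y • id` on `ℝ`, and `T x` is the section at `x` applied to `1`.
-/

/-- A symmetric real-valued function on `X × X` is a positive definite kernel. -/
def IsPosDefKernel {X : Type*} (K : X → X → ℝ) : Prop :=
  (∀ x y, K x y = K y x) ∧
  ∀ (n : ℕ) (x : Fin n → X) (c : Fin n → ℝ),
    0 ≤ ∑ i, ∑ j, K (x i) (x j) * c i * c j

universe u

open scoped InnerProductSpace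

theorem isPosDefKernel_inner {X H : Type*} [NormedAddCommGroup H] [InnerProductSpace ℝ H]
    (T : X → H) : IsPosDefKernel fun x y ↦ ⟪T x, T y⟫_ℝ := by
  refine ⟨fun x y ↦ real_inner_comm _ _, fun n x c ↦ ?_⟩
  calc 0 ≤ ⟪∑ i, c i • T (x i), ∑ j, c j • T (x j)⟫_ℝ := real_inner_self_nonneg
    _ = _ := by
      simp only [sum_inner, inner_sum, real_inner_smul_left, real_inner_smul_right]
      congr! 2 with i _ j _
      rw [real_inner_comm]
      ring

namespace IsPosDefKernel

variable {X : Type*} {K : X → X → ℝ}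

theorem sum_nonneg {ι : Type*} [Fintype ι] (hK : IsPosDefKernel K) (x : ι → X) (c : ι → ℝ) :
    0 ≤ ∑ i, ∑ j, K (x i) (x j) * c i * c j := by
  let e := (Fintype.equivFin ι).symm
  exact (hK.2 _ (x ∘ e) (c ∘ e)).trans_eq <|
    Fintype.sum_equiv e _ _ fun i ↦ Fintype.sum_equiv e _ _ fun j ↦ rfl

theorem posSemidef (hK : IsPosDefKernel K) : (Matrix.of K).PosSemidef := by
  refine ⟨Matrix.ext fun x y ↦ hK.1 y x, fun c ↦ ?_⟩
  refine (hK.sum_nonneg (fun i : c.support ↦ (i : X)) (fun i ↦ c i)).trans_eq ?_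
  simp only [Finsupp.sum, ← Finset.sum_coe_sort c.support, Matrix.of_apply, star_trivial]
  congr! 2 with x _ y _
  ring

end IsPosDefKernel

theorem Matrix.PosSemidef.map_algebraMap_continuousLinearMap {X : Type*} {K : Matrix X X ℝ}
    (hK : K.PosSemidef) : (K.map (algebraMap ℝ (ℝ →L[ℝ] ℝ))).PosSemidef := by
  have tfae := (RKHS.posSemidef_tfae (K := K.map (algebraMap ℝ (ℝ →L[ℝ] ℝ)))).out 0 2
  rw [tfae]
  refine ⟨hK.1.map _ fun r ↦ algebraMap_star_comm r, fun c ↦ ?_⟩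
  have hc := hK.2 c
  rw [Finsupp.sum_comm] at hc
  simpa [Finsupp.sum, mul_assoc] using hc

theorem IsPosDefKernel.exists_inner {X : Type u} {K : X → X → ℝ} (hK : IsPosDefKernel K) :
    ∃ (H : Type u) (_ : NormedAddCommGroup H) (_ : InnerProductSpace ℝ H)
      (_ : CompleteSpace H) (T : X → H), ∀ x y, K x y = ⟪T x, T y⟫_ℝ := by
  let K' := (Matrix.of K).map (algebraMap ℝ (ℝ →L[ℝ] ℝ))
  have : Fact K'.PosSemidef := ⟨hK.posSemidef.map_algebraMap_continuousLinearMap⟩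
  refine ⟨RKHS.OfKernel K', inferInstance, inferInstance, inferInstance,
    fun x ↦ RKHS.kerFun (RKHS.OfKernel K') x 1, fun x y ↦ ?_⟩
  rw [← RKHS.kernel_inner, RKHS.OfKernel.kernel_ofKernel, hK.1]
  simp [K']

theorem posDefKernel_iff_inner_general {X : Type u} (K : X → X → ℝ) :
    IsPosDefKernel K ↔
      ∃ (H : Type u) (_ : NormedAddCommGroup H) (_ : InnerProductSpace ℝ H)
        (_ : CompleteSpace H) (T : X → H),
        ∀ x y, K x y = @inner ℝ H _ (T x) (T y) := by
  refine ⟨IsPosDefKernel.exists_inner, ?_⟩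
  rintro ⟨H, _, _, _, T, hT⟩
  obtain rfl : K = fun x y ↦ ⟪T x, T y⟫_ℝ := funext₂ hT
  exact isPosDefKernel_inner T

/-- A symmetric function `K : X × X → ℝ` is a positive definite kernel if and only if there
exist a real Hilbert space `H` and a mapping `T : X → H` such that
`K x y = ⟪T x, T y⟫` for all `x, y`. -/
theorem posDefKernel_iff_inner {X : Type u} (K : X → X → ℝ)
    (hsym : ∀ x y, K x y = K y x) :
    IsPosDefKernel K ↔
      ∃ (H : Type u) (_ : NormedAddCommGroup H) (_ : InnerProductSpace ℝ H)
        (_ : CompleteSpace H) (T : X → H),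
        ∀ x y, K x y = @inner ℝ H _ (T x) (T y) :=
  posDefKernel_iff_inner_general K
end

section
/- Let X be a set and let N : X × X → ℝ be a symmetric function satisfying N(x,x) = 0 for every x ∈ X. Then N is a negative definite kernel if and only if there exist a real Hilbert space H and a mapping T : X → H such that N(x,y) = ‖T(x) − T(y)‖² for all x, y ∈ X. -/
/-!
On finitely supported functions `f : X →₀ ℝ` of total mass zero, negative definiteness says
exactly that `B f f := -½ ∑ N x y f x f y` is a positive semidefinite bilinear form;
completing the resulting pre-inner product space gives a Hilbert space `H`. Fixing `x₀`, send
`x` to the image of `δ_x - δ_{x₀}`; then `‖T x - T y‖² = B(δ_x - δ_y, δ_x - δ_y) = N x y`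
because `N` vanishes on the diagonal.
Conversely, for `∑ cᵢ = 0` one has `∑ᵢⱼ ‖aᵢ - aⱼ‖² cᵢ cⱼ = -2 ‖∑ cᵢ aᵢ‖² ≤ 0`.
-/

/-- A symmetric real-valued function on `X × X` is a negative definite kernel. -/
def IsNegDefKernel {X : Type*} (N : X → X → ℝ) : Prop :=
  (∀ x y, N x y = N y x) ∧
  ∀ (n : ℕ) (x : Fin n → X) (c : Fin n → ℝ), (∑ i, c i) = 0 →
    ∑ i, ∑ j, N (x i) (x j) * c i * c j ≤ 0

universe u

open Finset

theorem sum_sum_norm_sub_sq_mul_mul {ι E : Type*} [Fintype ι] [NormedAddCommGroup E]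
    [InnerProductSpace ℝ E] (a : ι → E) (c : ι → ℝ) (hc : ∑ i, c i = 0) :
    ∑ i, ∑ j, ‖a i - a j‖ ^ 2 * c i * c j = -2 * ‖∑ i, c i • a i‖ ^ 2 := by
  have hexpand : ∀ i j, ‖a i - a j‖ ^ 2 * c i * c j
      = ‖a i‖ ^ 2 * c i * c j + c i * (‖a j‖ ^ 2 * c j)
        - 2 * (c j * (c i * inner ℝ (a i) (a j))) :=
    fun i j => by rw [norm_sub_sq_real]; ring
  have hgram : ‖∑ i, c i • a i‖ ^ 2 = ∑ i, ∑ j, c j * (c i * inner ℝ (a i) (a j)) := by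
    rw [← real_inner_self_eq_norm_sq, sum_inner]
    simp only [inner_sum, real_inner_smul_left, real_inner_smul_right]
  simp only [hexpand, hgram, sum_sub_distrib, sum_add_distrib, ← mul_sum, ← sum_mul, hc]
  ring

theorem isNegDefKernel_norm_sub_sq {X E : Type*} [NormedAddCommGroup E] [InnerProductSpace ℝ E]
    (T : X → E) : IsNegDefKernel fun x y => ‖T x - T y‖ ^ 2 := by
  refine ⟨fun x y => by simp only [norm_sub_rev], fun n x c hc => ?_⟩
  calc _ = -2 * ‖∑ i, c i • T (x i)‖ ^ 2 := sum_sum_norm_sub_sq_mul_mul (fun i => T (x i)) c hc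
    _ ≤ 0 := mul_nonpos_of_nonpos_of_nonneg (by norm_num) (sq_nonneg _)

theorem LinearMap.BilinForm.IsPosSemidef.exists_linearMap_norm_sq_eq {V : Type u}
    [AddCommGroup V] [Module ℝ V] {B : LinearMap.BilinForm ℝ V} (hB : B.IsPosSemidef) :
    ∃ (H : Type u) (_ : NormedAddCommGroup H) (_ : InnerProductSpace ℝ H)
      (_ : CompleteSpace H) (φ : V →ₗ[ℝ] H), ∀ v, ‖φ v‖ ^ 2 = B v v := by
  let core : PreInnerProductSpace.Core ℝ V :=
    { inner := fun v w => B v w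
      conj_inner_symm := fun v w => hB.isSymm.eq w v
      re_inner_nonneg := hB.isNonneg.nonneg
      add_left := fun u v w => by simp
      smul_left := fun u v r => by simp }
  let _ : SeminormedAddCommGroup V := InnerProductSpace.Core.toSeminormedAddCommGroup (𝕜 := ℝ)
  let _ : InnerProductSpace ℝ V := .ofCore core
  refine ⟨UniformSpace.Completion V, inferInstance, inferInstance, inferInstance,
    (UniformSpace.Completion.toComplL : V →L[ℝ] _).toLinearMap, fun v => ?_⟩
  simp only [ContinuousLinearMap.coe_coe, UniformSpace.Completion.coe_toComplL,
    UniformSpace.Completion.norm_coe, ← real_inner_self_eq_norm_sq]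
  rfl

section KernelForm

variable {X : Type*}

noncomputable def kernelForm (N : X → X → ℝ) : LinearMap.BilinForm ℝ (X →₀ ℝ) :=
  Finsupp.linearCombination ℝ fun x => Finsupp.linearCombination ℝ (N x)

theorem kernelForm_single (N : X → X → ℝ) (x y : X) (a b : ℝ) :
    kernelForm N (Finsupp.single x a) (Finsupp.single y b) = a * b * N x y := by
  simp [kernelForm, mul_assoc]

theorem kernelForm_apply (N : X → X → ℝ) (f g : X →₀ ℝ) :
    kernelForm N f g = ∑ x ∈ f.support, ∑ y ∈ g.support, N x y * f x * g y := by
  simp only [kernelForm, Finsupp.linearCombination_apply, Finsupp.sum, LinearMap.coe_sum,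
    LinearMap.coe_smul, Finset.sum_apply, Pi.smul_apply, smul_eq_mul, mul_sum]
  exact sum_congr rfl fun _ _ => sum_congr rfl fun _ _ => by ring

theorem kernelForm_isSymm {N : X → X → ℝ} (hN : ∀ x y, N x y = N y x) :
    (kernelForm N).IsSymm :=
  ⟨fun f g => by
    rw [kernelForm_apply, kernelForm_apply, sum_comm]
    exact sum_congr rfl fun y _ => sum_congr rfl fun x _ => by rw [hN]; ring⟩

variable (X) in
noncomputable def zeroSumSubmodule : Submodule ℝ (X →₀ ℝ) :=
  LinearMap.ker (Finsupp.linearCombination ℝ fun _ : X => (1 : ℝ))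

theorem mem_zeroSumSubmodule {f : X →₀ ℝ} :
    f ∈ zeroSumSubmodule X ↔ ∑ x ∈ f.support, f x = 0 := by
  simp [zeroSumSubmodule, Finsupp.linearCombination_apply, Finsupp.sum]

theorem single_sub_single_mem_zeroSumSubmodule (x y : X) :
    Finsupp.single x 1 - Finsupp.single y 1 ∈ zeroSumSubmodule X := by
  simp [zeroSumSubmodule]

namespace IsNegDefKernel

variable {N : X → X → ℝ}

theorem sum_sum_mul_mul_nonpos (hN : IsNegDefKernel N) {ι : Type*} [Fintype ι] (x : ι → X)
    (c : ι → ℝ) (hc : ∑ i, c i = 0) : ∑ i, ∑ j, N (x i) (x j) * c i * c j ≤ 0 := by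
  let e := (Fintype.equivFin ι).symm
  calc ∑ i, ∑ j, N (x i) (x j) * c i * c j
      = ∑ i, ∑ j, N (x (e i)) (x (e j)) * c (e i) * c (e j) := by
        rw [← e.sum_comp]
        exact sum_congr rfl fun i _ => (e.sum_comp _).symm
    _ ≤ 0 := hN.2 _ (x ∘ e) (c ∘ e) ((Fintype.sum_equiv e _ _ fun _ => rfl).trans hc)

theorem kernelForm_nonpos (hN : IsNegDefKernel N) {f : X →₀ ℝ} (hf : f ∈ zeroSumSubmodule X) :
    kernelForm N f f ≤ 0 := by
  have hsum : ∑ x : f.support, f x = 0 :=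
    (sum_coe_sort f.support f).trans (mem_zeroSumSubmodule.1 hf)
  calc kernelForm N f f = ∑ x : f.support, ∑ y : f.support, N x y * f x * f y := by
        rw [kernelForm_apply, ← sum_coe_sort]
        exact sum_congr rfl fun x _ => (sum_coe_sort _ _).symm
    _ ≤ 0 := hN.sum_sum_mul_mul_nonpos (fun x : f.support => (x : X)) (fun x => f x) hsum

theorem isPosSemidef_neg_restrict_kernelForm (hN : IsNegDefKernel N) :
    (-(kernelForm N).restrict (zeroSumSubmodule X)).IsPosSemidef where
  eq v w := by simp [(kernelForm_isSymm hN.1).eq v.1 w.1]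
  nonneg v := neg_nonneg.2 (hN.kernelForm_nonpos v.2)

end IsNegDefKernel

end KernelForm

theorem negDefKernel_iff_dist_sq_general {X : Type u} (N : X → X → ℝ)
    (hdiag : ∀ x, N x x = 0) :
    IsNegDefKernel N ↔
      ∃ (H : Type u) (_ : NormedAddCommGroup H) (_ : InnerProductSpace ℝ H)
        (_ : CompleteSpace H) (T : X → H),
        ∀ x y, N x y = ‖T x - T y‖ ^ 2 := by
  refine ⟨fun hN => ?_, fun ⟨H, _, _, _, T, hT⟩ => ?_⟩
  · have hB := hN.isPosSemidef_neg_restrict_kernelForm.smul (by norm_num : (0 : ℝ) ≤ 2⁻¹)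
    -- `V` must be given: the submodule's `AddCommGroup` cannot be recovered by unification.
    obtain ⟨H, iH, iH', iH'', φ, hφ⟩ :=
      LinearMap.BilinForm.IsPosSemidef.exists_linearMap_norm_sq_eq (V := zeroSumSubmodule X) hB
    rcases isEmpty_or_nonempty X with _ | ⟨⟨x₀⟩⟩
    · exact ⟨H, iH, iH', iH'', isEmptyElim, isEmptyElim⟩
    let δ (x : X) : zeroSumSubmodule X :=
      ⟨Finsupp.single x 1 - Finsupp.single x₀ 1, single_sub_single_mem_zeroSumSubmodule x x₀⟩
    refine ⟨H, iH, iH', iH'', fun x => φ (δ x), fun x y => ?_⟩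
    rw [← map_sub, hφ]
    simp only [δ, LinearMap.smul_apply, LinearMap.neg_apply, LinearMap.BilinForm.restrict_apply,
      LinearMap.domRestrict_apply, map_sub, LinearMap.sub_apply, kernelForm_single, hdiag,
      hN.1 y x, smul_eq_mul]
    ring
  · rw [show N = fun x y => ‖T x - T y‖ ^ 2 from funext₂ hT]
    exact isNegDefKernel_norm_sub_sq T

/-- Schoenberg: a symmetric function `N : X × X → ℝ` vanishing on the diagonal is a negative
definite kernel if and only if there exist a real Hilbert space `H` and a mapping `T : X → H`
with `N x y = ‖T x - T y‖ ^ 2` for all `x, y`. -/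
theorem negDefKernel_iff_dist_sq {X : Type u} (N : X → X → ℝ)
    (hsym : ∀ x y, N x y = N y x) (hdiag : ∀ x, N x x = 0) :
    IsNegDefKernel N ↔
      ∃ (H : Type u) (_ : NormedAddCommGroup H) (_ : InnerProductSpace ℝ H)
        (_ : CompleteSpace H) (T : X → H),
        ∀ x y, N x y = ‖T x - T y‖ ^ 2 :=
  negDefKernel_iff_dist_sq_general N hdiag
end

section
/- Let X be an abelian group with an invariant metric d. If there exists a continuous positive definite function f : X → ℝ such that f(0) = 1 and g_f(t) > 0 for every t > 0, where g_f(t) = inf{ 1 − f(x) : d(x,0) ≥ t }, then X uniformly embeds into the unit sphere of a real Hilbert space. -/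
universe u

universe v

open scoped InnerProductSpace ComplexOrder

section Kernel

variable {𝕜 : Type v} [RCLike 𝕜] {X : Type u}

theorem IsPosDefKernel.sum_nonneg_s8 {K : X → X → ℝ} (hK : IsPosDefKernel K) {ι : Type*}
    [Fintype ι] (x : ι → X) (c : ι → ℝ) : 0 ≤ ∑ i, ∑ j, K (x i) (x j) * c i * c j := by
  let e := Fintype.equivFin ι
  convert hK.2 _ (x ∘ e.symm) (c ∘ e.symm) using 1
  exact Fintype.sum_equiv e _ _ fun i => Fintype.sum_equiv e _ _ fun j => by simp

theorem IsPosDefKernel.posSemidef_s8 {K : X → X → ℝ} (hK : IsPosDefKernel K) :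
    (Matrix.of K).PosSemidef := by
  refine ⟨Matrix.ext fun x y => by simp [hK.1], fun c => ?_⟩
  simpa [Finsupp.sum, ← Finset.sum_coe_sort c.support, mul_comm] using
    hK.sum_nonneg_s8 (fun i : c.support => (i : X)) (fun i => c i)

theorem Matrix.PosSemidef.map_algebraMap {M : Matrix X X 𝕜} (hM : M.PosSemidef) :
    (M.map (algebraMap 𝕜 (𝕜 →L[𝕜] 𝕜))).PosSemidef := by
  have hiff := (RKHS.posSemidef_tfae (V := 𝕜) (K := M.map (algebraMap 𝕜 (𝕜 →L[𝕜] 𝕜)))).out 2 0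
  rw [← hiff]
  refine ⟨?_, fun c => ?_⟩
  · ext x y : 1
    simp [Matrix.conjTranspose_apply, Algebra.algebraMap_eq_smul_one, ← hM.1.apply y x]
  · convert (RCLike.nonneg_iff.mp (hM.2 c)).1 using 1
    rw [← RCLike.conj_re, Finsupp.sum_comm]
    simp only [map_finsuppSum]
    refine Finsupp.sum_congr fun y _ => Finsupp.sum_congr fun x _ => ?_
    simp [Algebra.algebraMap_eq_smul_one, mul_comm, mul_left_comm]

theorem Matrix.PosSemidef.exists_inner_eq {K : X → X → 𝕜} (hK : (Matrix.of K).PosSemidef) :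
    ∃ (H : Type (max u v)) (_ : NormedAddCommGroup H) (_ : InnerProductSpace 𝕜 H)
      (_ : CompleteSpace H) (T : X → H), ∀ x y, ⟪T x, T y⟫_𝕜 = K x y := by
  -- `RKHS.OfKernel` takes operator-valued kernels; `K` acts on `𝕜` by multiplication.
  let M := (Matrix.of K).map (algebraMap 𝕜 (𝕜 →L[𝕜] 𝕜))
  have : Fact M.PosSemidef := ⟨hK.map_algebraMap⟩
  refine ⟨RKHS.OfKernel M, inferInstance, inferInstance, inferInstance,
    fun x => RKHS.kerFun (RKHS.OfKernel M) x 1, fun x y => ?_⟩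
  rw [← RKHS.kernel_inner, RKHS.OfKernel.kernel_ofKernel]
  simpa [M, Algebra.algebraMap_eq_smul_one] using hK.1.apply x y

end Kernel

theorem IsUniformEmbedding.isUnifEmb {X Y : Type*} [PseudoMetricSpace X] [PseudoMetricSpace Y]
    {T : X → Y} (hT : IsUniformEmbedding T) :
    IsUnifEmb (fun x y => dist x y) (fun u v => dist u v) T := by
  obtain ⟨hT₁, hT₂⟩ := Metric.isUniformInducing_iff.mp hT.isUniformInducing
  refine ⟨hT.injective, fun ε hε => ?_, fun ε hε => ?_⟩
  · obtain ⟨δ, hδ, h⟩ := Metric.uniformContinuous_iff.mp hT₁ ε hε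
    exact ⟨δ, hδ, fun x y => @h x y⟩
  · obtain ⟨δ, hδ, h⟩ := hT₂ ε hε
    exact ⟨δ, hδ, fun x y => @h x y⟩

section InvariantMetric

variable {X : Type*} [AddCommGroup X] {H : Type*} [NormedAddCommGroup H]
  [InnerProductSpace ℝ H] {f : X → ℝ} {T : X → H}

theorem dist_sq_eq_of_inner_eq (hT : ∀ x y, ⟪T x, T y⟫_ℝ = f (x - y)) (x y : X) :
    dist (T x) (T y) ^ 2 = 2 * (f 0 - f (x - y)) := by
  rw [dist_eq_norm, norm_sub_sq_real, ← real_inner_self_eq_norm_sq,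
    ← real_inner_self_eq_norm_sq, hT, hT, hT, sub_self, sub_self]
  ring

variable [PseudoMetricSpace X] (hinv : ∀ x y z : X, dist (x + z) (y + z) = dist x y)
include hinv

theorem dist_sub_zero_of_add_right_invariant (x y : X) : dist (x - y) 0 = dist x y := by
  simpa using (hinv (x - y) 0 y).symm

theorem uniformContinuous_of_inner_eq (hf : ContinuousAt f 0)
    (hT : ∀ x y, ⟪T x, T y⟫_ℝ = f (x - y)) : UniformContinuous T := by
  refine Metric.uniformContinuous_iff.mpr fun ε hε => ?_
  obtain ⟨δ, hδ, hfδ⟩ := Metric.continuousAt_iff.mp hf (ε ^ 2 / 2) (by positivity)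
  refine ⟨δ, hδ, fun {x y} hxy => ?_⟩
  have hfxy := hfδ (x := x - y) (by rwa [dist_sub_zero_of_add_right_invariant hinv])
  rw [Real.dist_eq, abs_lt] at hfxy
  have : dist (T x) (T y) ^ 2 < ε ^ 2 := by
    rw [dist_sq_eq_of_inner_eq hT]
    linarith
  exact lt_of_pow_lt_pow_left₀ 2 hε.le this

theorem isUniformInducing_of_inner_eq (hf : ContinuousAt f 0)
    (hg : ∀ t > (0 : ℝ), ∃ c > (0 : ℝ), ∀ x : X, t ≤ dist x 0 → c ≤ f 0 - f x)
    (hT : ∀ x y, ⟪T x, T y⟫_ℝ = f (x - y)) : IsUniformInducing T := by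
  refine Metric.isUniformInducing_iff.mpr
    ⟨uniformContinuous_of_inner_eq hinv hf hT, fun ε hε => ?_⟩
  obtain ⟨c, hc, hcε⟩ := hg ε hε
  refine ⟨√(2 * c), by positivity, fun {x y} hTxy => ?_⟩
  have : 2 * (f 0 - f (x - y)) < 2 * c := by
    rw [← dist_sq_eq_of_inner_eq hT, ← Real.sq_sqrt (by positivity : (0 : ℝ) ≤ 2 * c)]
    gcongr
  by_contra! hxy
  have := hcε (x - y) (by rwa [dist_sub_zero_of_add_right_invariant hinv])
  linarith

end InvariantMetric

/-- Let `X` be an abelian group with an invariant metric. If there is a continuous positive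
definite function `f : X → ℝ` with `f 0 = 1` such that
`g_f t = inf {1 - f x : d(x,0) ≥ t} > 0` for every `t > 0` (expressed here by: for every
`t > 0` there is `c > 0` with `1 - f x ≥ c` whenever `d(x,0) ≥ t`), then `X` uniformly
embeds into the unit sphere of a real Hilbert space. -/
theorem unifEmb_into_sphere_of_posDef
    {X : Type u} [AddCommGroup X] [MetricSpace X]
    (hinv : ∀ x y z : X, dist (x + z) (y + z) = dist x y)
    (f : X → ℝ) (hcont : Continuous f)
    (hpos : IsPosDefKernel (fun x y => f (x - y))) (h0 : f 0 = 1)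
    (hg : ∀ t > (0 : ℝ), ∃ c > (0 : ℝ), ∀ x : X, t ≤ dist x 0 → c ≤ 1 - f x) :
    ∃ (H : Type u) (_ : NormedAddCommGroup H) (_ : InnerProductSpace ℝ H)
      (_ : CompleteSpace H) (T : X → H),
      (∀ x, ‖T x‖ = 1) ∧
      IsUnifEmb (fun x y => dist x y) (fun u v => dist u v) T := by
  obtain ⟨H, _, _, _, T, hT⟩ := hpos.posSemidef_s8.exists_inner_eq
  have hnorm (x : X) : ‖T x‖ = 1 := by
    rw [← pow_eq_one_iff_of_nonneg (norm_nonneg _) two_ne_zero, ← real_inner_self_eq_norm_sq, hT,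
      sub_self, h0]
  rw [← h0] at hg
  exact ⟨H, inferInstance, inferInstance, inferInstance, T, hnorm,
    (isUniformInducing_of_inner_eq hinv hcont.continuousAt hg hT).isUniformEmbedding.isUnifEmb⟩
end

section
/- Every real Hilbert space uniformly embeds into the unit sphere of a real Hilbert space. -/
/-!
The Gaussian kernel `exp (-‖x - y‖²) = exp (-‖x‖²) exp (2⟪x, y⟫) exp (-‖y‖²)` is positive
semidefinite on any real inner product space: `exp (2⟪x, y⟫)` is an entrywise limit of nonnegative
combinations of Schur powers of the Gram matrix. By Moore's theorem it is then the Gram matrix of a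
map `T` into a Hilbert space (the associated reproducing kernel Hilbert space). Hence `‖T x‖ = 1`
and `‖T x - T y‖ = √(2 - 2 exp (-‖x - y‖²))`, a strictly increasing function of `‖x - y‖` that is
continuous and vanishes at `0`, which makes `T` a uniform embedding.
-/

open scoped InnerProductSpace

universe u

open scoped ComplexOrder Nat Matrix
open Filter Topology

namespace Matrix

variable {ι 𝕜 E : Type*} [RCLike 𝕜] [SeminormedAddCommGroup E] [InnerProductSpace 𝕜 E]

/-- Mathlib's `Matrix.posSemidef_gram` assumes a finite index type. -/
theorem posSemidef_gram' (v : ι → E) : (gram 𝕜 v).PosSemidef := by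
  refine ⟨isHermitian_gram 𝕜 v, fun x => ?_⟩
  have : (x.sum fun i a => x.sum fun j b => star a * gram 𝕜 v i j * b) =
      ⟪x.sum fun i a => a • v i, x.sum fun j b => b • v j⟫_𝕜 := by
    rw [Finsupp.sum_inner]
    simp_rw [Finsupp.inner_sum, inner_smul_left, inner_smul_right, gram_apply]
    exact Finsupp.sum_congr fun i _ => Finsupp.sum_congr fun j _ => by rw [RCLike.star_def]; ring
  rw [this, RCLike.le_iff_re_im]
  simp

theorem PosSemidef.map_pow {M : Matrix ι ι 𝕜} (hM : M.PosSemidef) (n : ℕ) :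
    (M.map (· ^ n)).PosSemidef := by
  induction n with
  | zero =>
    convert posSemidef_gram' (𝕜 := 𝕜) fun _ : ι => (1 : 𝕜)
    ext; simp [gram_apply]
  | succ n ih =>
    convert ih.hadamard hM using 1
    ext; simp [pow_succ]

theorem PosSemidef.of_tendsto {α : Type*} {l : Filter α} [l.NeBot] {A : α → Matrix ι ι 𝕜}
    {M : Matrix ι ι 𝕜} (hA : ∀ a, (A a).PosSemidef)
    (hAM : ∀ i j, Tendsto (fun a => A a i j) l (𝓝 (M i j))) : M.PosSemidef := by
  refine ⟨?_, fun x => ?_⟩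
  · ext i j
    refine tendsto_nhds_unique (l := l) ?_ (hAM i j)
    simpa [(hA _).isHermitian.apply] using (hAM j i).star
  · have hlim : Tendsto (fun a => x.sum fun i xi => x.sum fun j xj => star xi * A a i j * xj) l
        (𝓝 (x.sum fun i xi => x.sum fun j xj => star xi * M i j * xj)) :=
      tendsto_finsetSum _ fun i _ => tendsto_finsetSum _ fun j _ =>
        ((hAM i j).const_mul _).mul_const _
    exact ge_of_tendsto hlim (Eventually.of_forall fun a => (hA a).2 x)

theorem PosSemidef.map_exp {M : Matrix ι ι ℝ} (hM : M.PosSemidef) :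
    (M.map Real.exp).PosSemidef := by
  refine PosSemidef.of_tendsto (l := atTop)
    (A := fun N => ∑ k ∈ Finset.range N, (k ! : ℝ)⁻¹ • M.map (· ^ k))
    (fun N => posSemidef_sum _ fun k _ => (hM.map_pow k).smul (by positivity)) fun i j => ?_
  have := (NormedSpace.expSeries_div_hasSum_exp (M i j)).tendsto_sum_nat
  simpa [Real.exp_eq_exp_ℝ, Matrix.sum_apply, div_eq_inv_mul] using this

theorem PosSemidef.map_smul_one {X : Type*} {M : Matrix X X ℝ} (hM : M.PosSemidef) :
    (M.map fun a => a • (1 : ℝ →L[ℝ] ℝ)).PosSemidef := by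
  have h := (RKHS.posSemidef_tfae (K := M.map fun a => a • (1 : ℝ →L[ℝ] ℝ))).out 0 2
  refine h.mpr ⟨?_, fun c => ?_⟩
  · ext i j
    simpa using hM.isHermitian.apply i j
  · rw [Finsupp.sum_comm]
    simpa [mul_assoc] using hM.2 c

theorem PosSemidef.exists_gram_eq {X : Type u} {M : Matrix X X ℝ} (hM : M.PosSemidef) :
    ∃ (H : Type u) (_ : NormedAddCommGroup H) (_ : InnerProductSpace ℝ H) (_ : CompleteSpace H)
      (v : X → H), gram ℝ v = M := by
  set K := M.map fun a => a • (1 : ℝ →L[ℝ] ℝ)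
  have : Fact K.PosSemidef := ⟨hM.map_smul_one⟩
  refine ⟨RKHS.OfKernel K, inferInstance, inferInstance, inferInstance,
    fun x => RKHS.kerFun (RKHS.OfKernel K) x 1, ?_⟩
  ext x y
  rw [gram_apply, ← RKHS.kernel_inner, RKHS.OfKernel.kernel_ofKernel]
  simpa [K] using hM.isHermitian.apply x y

end Matrix

noncomputable def gaussianKernel (E : Type*) [SeminormedAddCommGroup E] : Matrix E E ℝ :=
  Matrix.of fun x y => Real.exp (-‖x - y‖ ^ 2)

theorem posSemidef_gaussianKernel (E : Type*) [SeminormedAddCommGroup E]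
    [InnerProductSpace ℝ E] :
    (gaussianKernel E).PosSemidef := by
  have hscale := Matrix.posSemidef_gram' (𝕜 := ℝ) fun x : E => Real.exp (-‖x‖ ^ 2)
  have hexp :=
    ((Matrix.posSemidef_gram' (𝕜 := ℝ) (id : E → E)).smul (zero_le_two (α := ℝ))).map_exp
  have hfactor : gaussianKernel E = (Matrix.gram ℝ fun x : E => Real.exp (-‖x‖ ^ 2)) ⊙
      (((2 : ℝ) • Matrix.gram ℝ id).map Real.exp) := by
    ext x y
    simp only [gaussianKernel, Matrix.of_apply, Matrix.hadamard_apply, Matrix.map_apply,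
      Matrix.smul_apply, Matrix.gram_apply, id, norm_sub_sq_real, RCLike.inner_apply, conj_trivial]
    rw [← Real.exp_add, ← Real.exp_add]
    congr 1
    rw [real_inner_comm]
    ring
  exact hfactor ▸ hscale.hadamard hexp

theorem isUnifEmb_of_dist_eq {X Y : Type*} [MetricSpace X] [PseudoMetricSpace Y] {T : X → Y}
    {f : ℝ → ℝ} (hf : StrictMonoOn f (Set.Ici 0)) (hf0 : f 0 = 0) (hfc : ContinuousAt f 0)
    (hT : ∀ x y, dist (T x) (T y) = f (dist x y)) :
    IsUnifEmb (fun x y => dist x y) (fun u v => dist u v) T := by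
  refine ⟨fun x y hxy => ?_, fun ε hε => ?_, fun ε hε => ?_⟩
  · have : f (dist x y) = f 0 := by rw [← hT, hxy, dist_self, hf0]
    exact dist_eq_zero.mp (hf.injOn dist_nonneg Set.self_mem_Ici this)
  · obtain ⟨δ, hδ, hfδ⟩ := Metric.continuousAt_iff.mp hfc ε hε
    refine ⟨δ, hδ, fun x y hxy => ?_⟩
    have := hfδ (x := dist x y) (by simpa using hxy)
    rw [hf0, Real.dist_eq, sub_zero] at this
    exact (hT x y).trans_lt ((le_abs_self _).trans_lt this)
  · refine ⟨f ε, hf0 ▸ hf Set.self_mem_Ici hε.le hε, fun x y hxy => ?_⟩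
    exact (hf.lt_iff_lt dist_nonneg hε.le).mp ((hT x y).symm.trans_lt hxy)

theorem strictMonoOn_sqrt_two_sub_two_mul_exp_neg_sq :
    StrictMonoOn (fun t : ℝ => √(2 - 2 * Real.exp (-t ^ 2))) (Set.Ici 0) := by
  intro s hs t ht hst
  have hexp : Real.exp (-t ^ 2) < Real.exp (-s ^ 2) := by gcongr
  have : Real.exp (-s ^ 2) ≤ 1 := Real.exp_le_one_iff.mpr (by nlinarith)
  exact Real.sqrt_lt_sqrt (by linarith) (by linarith)

theorem hilbert_unifEmb_into_sphere_general
    (H : Type u) [NormedAddCommGroup H] [InnerProductSpace ℝ H] :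
    ∃ (H' : Type u) (_ : NormedAddCommGroup H') (_ : InnerProductSpace ℝ H')
      (_ : CompleteSpace H') (T : H → H'),
      (∀ x, ‖T x‖ = 1) ∧
      IsUnifEmb (fun x y => dist x y) (fun u v => dist u v) T := by
  obtain ⟨H', _, _, _, T, hT⟩ := (posSemidef_gaussianKernel H).exists_gram_eq
  have hinner (x y : H) : ⟪T x, T y⟫_ℝ = Real.exp (-dist x y ^ 2) := by
    simpa [gaussianKernel, dist_eq_norm] using congr_fun₂ hT x y
  have hnorm (x : H) : ‖T x‖ = 1 := by
    rw [← pow_eq_one_iff_of_nonneg (norm_nonneg _) two_ne_zero, ← real_inner_self_eq_norm_sq,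
      hinner, dist_self]
    simp
  refine ⟨H', inferInstance, inferInstance, inferInstance, T, hnorm,
    isUnifEmb_of_dist_eq strictMonoOn_sqrt_two_sub_two_mul_exp_neg_sq (by simp) (by fun_prop)
      fun x y => ?_⟩
  rw [← Real.sqrt_sq dist_nonneg, dist_eq_norm, norm_sub_sq_real, hinner, hnorm, hnorm]
  ring_nf

/-- Every real Hilbert space uniformly embeds into the unit sphere of a real Hilbert
space. -/
theorem hilbert_unifEmb_into_sphere
    (H : Type u) [NormedAddCommGroup H] [InnerProductSpace ℝ H] [CompleteSpace H] :
    ∃ (H' : Type u) (_ : NormedAddCommGroup H') (_ : InnerProductSpace ℝ H')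
      (_ : CompleteSpace H') (T : H → H'),
      (∀ x, ‖T x‖ = 1) ∧
      IsUnifEmb (fun x y => dist x y) (fun u v => dist u v) T :=
  hilbert_unifEmb_into_sphere_general H
end

section
/- Let X be a real vector space (or more generally an abelian group) and let f : X → ℝ be a negative definite function with f(0) = 0. Then for every x ∈ X and every n ∈ ℕ one has f(n•x) ≤ n²·f(x). -/
namespace IsNegDefKernel

theorem three_point_le {X : Type*} {N : X → X → ℝ} (hN : IsNegDefKernel N)
    (hdiag : ∀ x, N x x = 0) (x y z : X) {a b c : ℝ} (habc : a + b + c = 0) :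
    a * b * N x y + a * c * N x z + b * c * N y z ≤ 0 := by
  have h := hN.2 3 ![x, y, z] ![a, b, c] (by simpa [Fin.sum_univ_three] using habc)
  simp only [Fin.sum_univ_three, Matrix.cons_val_zero, Matrix.cons_val_one,
    Matrix.cons_val_two, Matrix.head_cons, Matrix.tail_cons, hdiag, hN.1 y x, hN.1 z x,
    hN.1 z y] at h
  linarith

end IsNegDefKernel

theorem natCast_mul_apply_succ_nsmul_le {X : Type*} [AddCommGroup X] {f : X → ℝ}
    (hf : IsNegDefKernel (fun x y => f (x - y))) (h0 : f 0 = 0)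
    (x : X) (n : ℕ) :
    n * f ((n + 1) • x) ≤ (n + 1) * f (n • x) + n * (n + 1) * f x := by
  have h := hf.three_point_le (fun y => by simp [h0]) ((n + 1) • x) x 0
    (a := 1) (b := -(n + 1)) (c := n) (by ring)
  have hsub : (n + 1) • x - x = n • x := by rw [succ_nsmul, add_sub_cancel_right]
  simp only [hsub, sub_zero] at h
  linarith

/-- If `f` is a negative definite function on an abelian group `X` with `f 0 = 0`, then
`f (n • x) ≤ n ^ 2 * f x` for every `x ∈ X` and `n ∈ ℕ`. -/
theorem negDef_nsmul_le {X : Type*} [AddCommGroup X] (f : X → ℝ)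
    (hf : IsNegDefKernel (fun x y => f (x - y))) (h0 : f 0 = 0) :
    ∀ (x : X) (n : ℕ), f (n • x) ≤ (n : ℝ) ^ 2 * f x := by
  intro x n
  induction n with
  | zero => simp [h0]
  | succ n ih =>
    rcases Nat.eq_zero_or_pos n with rfl | hn
    · simp
    have hn' : (0 : ℝ) < n := by exact_mod_cast hn
    have hrec := natCast_mul_apply_succ_nsmul_le hf h0 x n
    have hscaled : (n + 1 : ℝ) * f (n • x) ≤ (n + 1) * (n ^ 2 * f x) :=
      mul_le_mul_of_nonneg_left ih (by positivity)
    refine le_of_mul_le_mul_left ?_ hn'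
    push_cast
    linear_combination hrec + hscaled
end

section
/- Let X be an abelian group and let f : X → ℝ be a negative definite function with f(0) = 0. Then f takes nonnegative values and for all x, y ∈ X one has √(f(x+y)) ≤ √(f(x)) + √(f(y)). -/
theorem Real.sqrt_le_sqrt_add_sqrt_of_quadratic_nonneg {p q d : ℝ} (hp : 0 ≤ p) (hq : 0 ≤ q)
    (h : ∀ t, 0 ≤ p * (t * t) + (p + q - d) * t + q) : √d ≤ √p + √q := by
  have hdiscrim : (p + q - d) ^ 2 ≤ 4 * p * q := by
    simpa [discrim, sub_nonpos] using discrim_le_zero h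
  have hcross : |p + q - d| ≤ 2 * √p * √q := by
    calc |p + q - d| ≤ √(4 * p * q) := Real.abs_le_sqrt hdiscrim
      _ = 2 * √p * √q := by
        rw [Real.sqrt_mul (by positivity), Real.sqrt_mul (by positivity),
          show (4 : ℝ) = 2 ^ 2 by norm_num, Real.sqrt_sq zero_le_two]
  refine Real.sqrt_le_iff.mpr ⟨by positivity, ?_⟩
  rw [add_sq, Real.sq_sqrt hp, Real.sq_sqrt hq]
  linarith [neg_abs_le (p + q - d)]

namespace IsNegDefKernel

variable {X : Type*} {N : X → X → ℝ}

theorem three_point_quadratic_nonneg (hN : IsNegDefKernel N) (hdiag : ∀ x, N x x = 0)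
    (x y z : X) (t : ℝ) :
    0 ≤ N z x * (t * t) + (N z x + N z y - N x y) * t + N z y := by
  have h := hN.2 3 ![z, x, y] ![-(t + 1), t, 1] (by simp [Fin.sum_univ_three])
  simp only [Fin.sum_univ_three, Matrix.cons_val_zero, Matrix.cons_val_one, Matrix.cons_val_two,
    Matrix.head_cons, Matrix.tail_cons, hdiag, hN.1 x z, hN.1 y z, hN.1 y x] at h
  linarith

theorem nonneg (hN : IsNegDefKernel N) (hdiag : ∀ x, N x x = 0) (x y : X) : 0 ≤ N x y := by
  simpa using hN.three_point_quadratic_nonneg hdiag y y x 0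

theorem sqrt_triangle (hN : IsNegDefKernel N) (hdiag : ∀ x, N x x = 0) (x y z : X) :
    √(N x y) ≤ √(N x z) + √(N z y) := by
  rw [hN.1 x z]
  exact Real.sqrt_le_sqrt_add_sqrt_of_quadratic_nonneg (hN.nonneg hdiag z x)
    (hN.nonneg hdiag z y) (hN.three_point_quadratic_nonneg hdiag x y z)

end IsNegDefKernel

/-- If `f` is a negative definite function on an abelian group `X` with `f 0 = 0`, then `f`
is nonnegative and `√(f (x + y)) ≤ √(f x) + √(f y)` for all `x, y`. -/
theorem negDef_sqrt_subadditive {X : Type*} [AddCommGroup X] (f : X → ℝ)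
    (hf : IsNegDefKernel (fun x y => f (x - y))) (h0 : f 0 = 0) :
    (∀ x, 0 ≤ f x) ∧
    ∀ x y : X, Real.sqrt (f (x + y)) ≤ Real.sqrt (f x) + Real.sqrt (f y) := by
  have hdiag : ∀ x : X, f (x - x) = 0 := by simpa using h0
  refine ⟨fun x => by simpa using hf.nonneg hdiag x 0, fun x y => ?_⟩
  simpa [sub_eq_add_neg] using hf.sqrt_triangle hdiag x (-y) 0
end

section
/- Let 0 < p ≤ 1, let X be a nonzero p-normed space, and let f : X → ℝ be a negative definite function with f(0) = 0. For t > 0 set ρ_f(t) = inf{ f(x) : x ∈ X, ‖x‖^p ≥ t }. If ρ_f(t₀) > 0 for some t₀ > 0, then ρ_f(t) > 0 for every t > 0. -/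
/-- `ρ_f t = inf {f x : ‖x‖ ^ p ≥ t}`. -/
noncomputable def rhoInf {X : Type*} (nrm : X → ℝ) (p : ℝ) (f : X → ℝ) (t : ℝ) : ℝ :=
  sInf (f '' {x | t ≤ nrm x ^ p})

/-!
Negative definiteness of `f` with `f 0 = 0` gives the three-point inequality
`a b f(u + v) ≤ (a + b)(a f(u) + b f(v))`, whence `f (n • x) ≤ n² f(x)` by induction on `n`.
Given `t > 0`, choose `n` with `t₀ ≤ nᵖ t`; multiplication by `n` maps `{‖x‖ᵖ ≥ t}` into
`{‖x‖ᵖ ≥ t₀}`, so `ρ_f(t) ≥ ρ_f(t₀) / n² > 0`. This needs `{‖x‖ᵖ ≥ t}` to be nonempty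
(`sInf ∅ = 0`); it contains a multiple of a point of `{‖x‖ᵖ ≥ t₀}`, which is nonempty since
`ρ_f(t₀) ≠ 0`.
-/

namespace IsNegDefKernel

variable {X : Type*} [AddCommGroup X] {f : X → ℝ}

theorem apply_neg (hf : IsNegDefKernel fun x y => f (x - y)) (x : X) : f (-x) = f x := by
  simpa using hf.1 0 x

theorem apply_nonneg (hf : IsNegDefKernel fun x y => f (x - y)) (h0 : f 0 = 0) (x : X) :
    0 ≤ f x := by
  have := hf.2 2 ![x, 0] ![1, -1] (by simp)
  simp only [Fin.sum_univ_two, Matrix.cons_val_zero, Matrix.cons_val_one, sub_self, sub_zero,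
    zero_sub, hf.apply_neg, h0] at this
  linarith

/-- The kernel inequality for the points `u`, `-v`, `0` with weights `a`, `b`, `-(a + b)`. -/
theorem mul_apply_add_le (hf : IsNegDefKernel fun x y => f (x - y)) (h0 : f 0 = 0)
    (u v : X) (a b : ℝ) : a * b * f (u + v) ≤ (a + b) * (a * f u + b * f v) := by
  have := hf.2 3 ![u, -v, 0] ![a, b, -(a + b)] (by simp [Fin.sum_univ_three])
  simp only [Fin.sum_univ_three, Matrix.cons_val_zero, Matrix.cons_val_one, Matrix.cons_val_two,
    Matrix.tail_cons, Matrix.head_cons, sub_self, sub_zero, zero_sub, sub_neg_eq_add,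
    neg_add_cancel, zero_add, h0, hf.apply_neg] at this
  rw [show -v - u = -(u + v) by abel, hf.apply_neg] at this
  nlinarith

theorem apply_nsmul_le (hf : IsNegDefKernel fun x y => f (x - y)) (h0 : f 0 = 0)
    (n : ℕ) (x : X) : f (n • x) ≤ n ^ 2 * f x := by
  induction n with
  | zero => simp [h0]
  | succ k ih =>
    rcases Nat.eq_zero_or_pos k with rfl | hk
    · simp
    have hkR : (0 : ℝ) < k := by exact_mod_cast hk
    have key := hf.mul_apply_add_le h0 (k • x) x 1 k
    have hx := hf.apply_nonneg h0 x
    have hstep : (k : ℝ) * f (k • x + x) ≤ k * ((k + 1) ^ 2 * f x) := by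
      nlinarith [mul_le_mul_of_nonneg_left ih (by linarith : (0 : ℝ) ≤ 1 + k)]
    rw [succ_nsmul]
    push_cast
    exact le_of_mul_le_mul_left hstep hkR

end IsNegDefKernel

theorem exists_nat_pos_le_rpow_mul {p s : ℝ} (hp : 0 < p) (hs : 0 < s) (a : ℝ) :
    ∃ n : ℕ, 0 < n ∧ a ≤ (n : ℝ) ^ p * s := by
  have h : Filter.Tendsto (fun n : ℕ => (n : ℝ) ^ p * s) Filter.atTop Filter.atTop :=
    ((tendsto_rpow_atTop hp).comp tendsto_natCast_atTop_atTop).atTop_mul_const hs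
  exact ((Filter.eventually_gt_atTop 0).and (h.eventually_ge_atTop a)).exists

section PHomogeneous

variable {X : Type*} [AddCommGroup X] [Module ℝ X] {nrm : X → ℝ} {p : ℝ}

theorem le_rpow_nsmul (hnrm_nonneg : ∀ x, 0 ≤ nrm x)
    (hnrm_smul : ∀ (a : ℝ) (x : X), nrm (a • x) = |a| * nrm x)
    {n : ℕ} {s t : ℝ} (hst : s ≤ (n : ℝ) ^ p * t) {x : X} (hx : t ≤ nrm x ^ p) :
    s ≤ nrm (n • x) ^ p := by
  rw [← Nat.cast_smul_eq_nsmul ℝ, hnrm_smul, Nat.abs_cast,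
    Real.mul_rpow n.cast_nonneg (hnrm_nonneg x)]
  exact hst.trans (mul_le_mul_of_nonneg_left hx (Real.rpow_nonneg n.cast_nonneg p))

end PHomogeneous

section RhoInf

variable {X : Type*} {nrm : X → ℝ} {p : ℝ} {f : X → ℝ}

theorem exists_le_rpow_of_rhoInf_ne_zero {t : ℝ} (h : rhoInf nrm p f t ≠ 0) :
    ∃ x, t ≤ nrm x ^ p := by
  by_contra! hempty
  apply h
  have : {x | t ≤ nrm x ^ p} = ∅ := Set.eq_empty_of_forall_notMem fun x hx => (hempty x).not_ge hx
  simp [rhoInf, this]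

theorem rhoInf_div_sq_le [AddMonoid X] (hf_nonneg : ∀ x, 0 ≤ f x) {n : ℕ} (hn : 0 < n)
    (hf_nsmul : ∀ x, f (n • x) ≤ (n : ℝ) ^ 2 * f x) {s t : ℝ}
    (hnsmul : ∀ x, t ≤ nrm x ^ p → s ≤ nrm (n • x) ^ p) (hne : ∃ x, t ≤ nrm x ^ p) :
    rhoInf nrm p f s / (n : ℝ) ^ 2 ≤ rhoInf nrm p f t := by
  obtain ⟨y, hy⟩ := hne
  have hbdd : BddBelow (f '' {x | s ≤ nrm x ^ p}) := ⟨0, by rintro _ ⟨x, -, rfl⟩; exact hf_nonneg x⟩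
  refine le_csInf ⟨f y, y, hy, rfl⟩ ?_
  rintro _ ⟨x, hx, rfl⟩
  rw [div_le_iff₀ (by positivity), mul_comm]
  exact (csInf_le hbdd ⟨n • x, hnsmul x hx, rfl⟩).trans (hf_nsmul x)

end RhoInf

theorem rhoInf_pos_of_pos_general
    (p : ℝ) (hp0 : 0 < p)
    (X : Type*) [AddCommGroup X] [Module ℝ X] (nrm : X → ℝ)
    (hnrm_nonneg : ∀ x, 0 ≤ nrm x)
    (hnrm_smul : ∀ (a : ℝ) (x : X), nrm (a • x) = |a| * nrm x)
    (f : X → ℝ) (hf : IsNegDefKernel (fun x y => f (x - y))) (h0 : f 0 = 0)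
    (hpos : ∃ t₀ > (0 : ℝ), 0 < rhoInf nrm p f t₀) :
    ∀ t > (0 : ℝ), 0 < rhoInf nrm p f t := by
  intro t ht
  obtain ⟨t₀, ht₀, hρ⟩ := hpos
  obtain ⟨x₀, hx₀⟩ := exists_le_rpow_of_rhoInf_ne_zero hρ.ne'
  obtain ⟨m, -, hm⟩ := exists_nat_pos_le_rpow_mul hp0 ht₀ t
  obtain ⟨n, hn, hn'⟩ := exists_nat_pos_le_rpow_mul hp0 ht t₀
  calc 0 < rhoInf nrm p f t₀ / (n : ℝ) ^ 2 := by positivity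
    _ ≤ rhoInf nrm p f t :=
      rhoInf_div_sq_le (hf.apply_nonneg h0) hn (hf.apply_nsmul_le h0 n)
        (fun _ => le_rpow_nsmul hnrm_nonneg hnrm_smul hn')
        ⟨m • x₀, le_rpow_nsmul hnrm_nonneg hnrm_smul hm hx₀⟩

/-- Let `X` be a nonzero `p`-normed space (`0 < p ≤ 1`) and let `f : X → ℝ` be a negative
definite function with `f 0 = 0`. If `ρ_f t₀ > 0` for some `t₀ > 0`, then `ρ_f t > 0` for
every `t > 0`. -/
theorem rhoInf_pos_of_pos
    (p : ℝ) (hp0 : 0 < p) (hp1 : p ≤ 1)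
    (X : Type*) [AddCommGroup X] [Module ℝ X] (nrm : X → ℝ)
    (hnrm_nonneg : ∀ x, 0 ≤ nrm x)
    (hnrm_zero : ∀ x, nrm x = 0 ↔ x = 0)
    (hnrm_smul : ∀ (a : ℝ) (x : X), nrm (a • x) = |a| * nrm x)
    (hnrm_tri : ∀ x y, nrm (x + y) ^ p ≤ nrm x ^ p + nrm y ^ p)
    (hX : ∃ x : X, x ≠ 0)
    (f : X → ℝ) (hf : IsNegDefKernel (fun x y => f (x - y))) (h0 : f 0 = 0)
    (hpos : ∃ t₀ > (0 : ℝ), 0 < rhoInf nrm p f t₀) :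
    ∀ t > (0 : ℝ), 0 < rhoInf nrm p f t :=
  rhoInf_pos_of_pos_general p hp0 X nrm hnrm_nonneg hnrm_smul f hf h0 hpos
end

section
/- Let 0 < p ≤ 1, let X be a nonzero p-normed space, and let f : X → ℝ be a negative definite function with f(0) = 0. For t > 0 set ρ_f(t) = inf{ f(x) : x ∈ X, ‖x‖^p ≥ t }. Then for all 0 < t < s one has ρ_f(s) ≤ (4·ρ_f(t)/t^(2/p))·s^(2/p). -/
open Real

section NegDef

variable {X : Type*} [AddCommGroup X] {f : X → ℝ}

theorem IsNegDefKernel.apply_neg_s14 (hf : IsNegDefKernel (fun x y => f (x - y))) (x : X) :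
    f (-x) = f x := by
  simpa using (hf.1 x 0).symm

theorem IsNegDefKernel.nonneg_s14 (hf : IsNegDefKernel (fun x y => f (x - y))) (h0 : f 0 = 0)
    (x : X) : 0 ≤ f x := by
  simpa [Fin.sum_univ_two, h0, hf.apply_neg_s14] using hf.2 2 ![x, 0] ![1, -1] (by simp)

theorem IsNegDefKernel.apply_two_nsmul_le (hf : IsNegDefKernel (fun x y => f (x - y)))
    (h0 : f 0 = 0) (x : X) : f (2 • x) ≤ 4 * f x := by
  -- the kernel inequality for the points `0, x, 2x` with weights `1, -2, 1`
  have h := hf.2 3 ![0, x, x + x] ![1, -2, 1] (by simp [Fin.sum_univ_three]; norm_num)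
  have hform : ∑ i, ∑ j, f (![0, x, x + x] i - ![0, x, x + x] j) * ![1, -2, 1] i * ![1, -2, 1] j
      = 2 * f (x + x) - 8 * f x := by
    have h2 : f (-x + -x) = f (x + x) := by rw [← neg_add, hf.apply_neg_s14]
    simp [Fin.sum_univ_three, h0, hf.apply_neg_s14, h2]
    ring
  rw [two_nsmul]
  linarith

theorem IsNegDefKernel.apply_two_pow_nsmul_le (hf : IsNegDefKernel (fun x y => f (x - y)))
    (h0 : f 0 = 0) (n : ℕ) (x : X) : f ((2 ^ n) • x) ≤ 4 ^ n * f x := by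
  induction n with
  | zero => simp
  | succ n ih =>
    calc f ((2 ^ (n + 1)) • x) = f (2 • (2 ^ n) • x) := by rw [pow_succ', mul_nsmul']
      _ ≤ 4 * f ((2 ^ n) • x) := hf.apply_two_nsmul_le h0 _
      _ ≤ 4 ^ (n + 1) * f x := by rw [pow_succ']; linarith

end NegDef

section PNormed

variable {X : Type*} [AddCommGroup X] [Module ℝ X] {nrm : X → ℝ} {p : ℝ}

theorem rpow_nrm_smul (hnrm_nonneg : ∀ x, 0 ≤ nrm x)
    (hnrm_smul : ∀ (a : ℝ) (x : X), nrm (a • x) = |a| * nrm x) (a : ℝ) (x : X) :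
    nrm (a • x) ^ p = |a| ^ p * nrm x ^ p := by
  rw [hnrm_smul, mul_rpow (abs_nonneg a) (hnrm_nonneg x)]

theorem exists_le_rpow_nrm (hp0 : 0 < p) (hnrm_nonneg : ∀ x, 0 ≤ nrm x)
    (hnrm_zero : ∀ x, nrm x = 0 ↔ x = 0)
    (hnrm_smul : ∀ (a : ℝ) (x : X), nrm (a • x) = |a| * nrm x)
    (hX : ∃ x : X, x ≠ 0) {t : ℝ} (ht : 0 ≤ t) : ∃ x : X, t ≤ nrm x ^ p := by
  obtain ⟨x₀, hx₀⟩ := hX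
  have hpos : 0 < nrm x₀ := (hnrm_nonneg x₀).lt_of_ne' (mt (hnrm_zero x₀).1 hx₀)
  refine ⟨(t ^ p⁻¹ / nrm x₀) • x₀, le_of_eq ?_⟩
  rw [hnrm_smul, abs_of_nonneg (by positivity), div_mul_cancel₀ _ hpos.ne',
    rpow_inv_rpow ht hp0.ne']

end PNormed

section RhoInf

variable {X : Type*} {nrm : X → ℝ} {p : ℝ} {f : X → ℝ}

theorem rhoInf_nonneg (hf : ∀ x, 0 ≤ f x) (t : ℝ) : 0 ≤ rhoInf nrm p f t :=
  Real.sInf_nonneg (by rintro _ ⟨x, -, rfl⟩; exact hf x)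

theorem rhoInf_le (hf : ∀ x, 0 ≤ f x) {t : ℝ} {x : X} (hx : t ≤ nrm x ^ p) :
    rhoInf nrm p f t ≤ f x :=
  csInf_le ⟨0, by rintro _ ⟨y, -, rfl⟩; exact hf y⟩ ⟨x, hx, rfl⟩

theorem le_rhoInf {t c : ℝ} (hne : ∃ x, t ≤ nrm x ^ p) (h : ∀ x, t ≤ nrm x ^ p → c ≤ f x) :
    c ≤ rhoInf nrm p f t := by
  obtain ⟨x, hx⟩ := hne
  exact le_csInf ⟨f x, x, hx, rfl⟩ (by rintro _ ⟨y, hy, rfl⟩; exact h y hy)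

end RhoInf

theorem rhoInf_le_four_pow_mul_rhoInf {X : Type*} [AddCommGroup X] [Module ℝ X]
    {nrm : X → ℝ} {p : ℝ} {f : X → ℝ} (hnrm_nonneg : ∀ x, 0 ≤ nrm x)
    (hnrm_smul : ∀ (a : ℝ) (x : X), nrm (a • x) = |a| * nrm x)
    (hf : IsNegDefKernel (fun x y => f (x - y))) (h0 : f 0 = 0) {n : ℕ} {s t : ℝ}
    (hne : ∃ x, t ≤ nrm x ^ p) (hst : s ≤ ((2 : ℝ) ^ n) ^ p * t) :
    rhoInf nrm p f s ≤ 4 ^ n * rhoInf nrm p f t := by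
  have hdilate : ∀ x, t ≤ nrm x ^ p → rhoInf nrm p f s ≤ 4 ^ n * f x := fun x hx =>
    calc rhoInf nrm p f s ≤ f ((2 : ℝ) ^ n • x) := by
          refine rhoInf_le (hf.nonneg_s14 h0) ?_
          rw [rpow_nrm_smul hnrm_nonneg hnrm_smul, abs_of_nonneg (by positivity)]
          exact hst.trans (by gcongr)
      _ = f ((2 ^ n : ℕ) • x) := by rw [← Nat.cast_smul_eq_nsmul ℝ]; push_cast; rfl
      _ ≤ 4 ^ n * f x := hf.apply_two_pow_nsmul_le h0 n x
  exact (div_le_iff₀' (by positivity)).1 <|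
    le_rhoInf hne fun x hx => (div_le_iff₀' (by positivity)).2 (hdilate x hx)

theorem exists_two_pow_between {r : ℝ} (hr : 1 ≤ r) : ∃ n : ℕ, r ≤ 2 ^ n ∧ 2 ^ n ≤ 2 * r := by
  obtain ⟨n, hle, hlt⟩ := exists_nat_pow_near hr one_lt_two
  exact ⟨n + 1, hlt.le, by rw [pow_succ']; linarith⟩

theorem rhoInf_growth_general
    (p : ℝ) (hp0 : 0 < p)
    (X : Type*) [AddCommGroup X] [Module ℝ X] (nrm : X → ℝ)
    (hnrm_nonneg : ∀ x, 0 ≤ nrm x)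
    (hnrm_zero : ∀ x, nrm x = 0 ↔ x = 0)
    (hnrm_smul : ∀ (a : ℝ) (x : X), nrm (a • x) = |a| * nrm x)
    (hX : ∃ x : X, x ≠ 0)
    (f : X → ℝ) (hf : IsNegDefKernel (fun x y => f (x - y))) (h0 : f 0 = 0) :
    ∀ t s : ℝ, 0 < t → t < s →
      rhoInf nrm p f s ≤ 4 * rhoInf nrm p f t / t ^ (2 / p) * s ^ (2 / p) := by
  intro t s ht hts
  have hst : 1 ≤ s / t := (one_le_div ht).2 hts.le
  set r := (s / t) ^ p⁻¹ with hr
  obtain ⟨n, hrn, hnr⟩ := exists_two_pow_between (one_le_rpow hst (inv_nonneg.2 hp0.le))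
  have hscale : s ≤ ((2 : ℝ) ^ n) ^ p * t :=
    calc s = r ^ p * t := by rw [hr, rpow_inv_rpow (by positivity) hp0.ne', div_mul_cancel₀ _ ht.ne']
      _ ≤ ((2 : ℝ) ^ n) ^ p * t := by gcongr
  have hfour : (4 : ℝ) ^ n ≤ 4 * (s / t) ^ (2 / p) :=
    calc (4 : ℝ) ^ n = ((2 : ℝ) ^ n) ^ 2 := by rw [← pow_mul, mul_comm, pow_mul]; norm_num
      _ ≤ (2 * r) ^ 2 := by gcongr
      _ = 4 * (s / t) ^ (2 / p) := by
        rw [mul_pow, hr, ← rpow_mul_natCast (by positivity)]; norm_num [div_eq_inv_mul]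
  calc rhoInf nrm p f s ≤ 4 ^ n * rhoInf nrm p f t :=
        rhoInf_le_four_pow_mul_rhoInf hnrm_nonneg hnrm_smul hf h0
          (exists_le_rpow_nrm hp0 hnrm_nonneg hnrm_zero hnrm_smul hX ht.le) hscale
    _ ≤ 4 * (s / t) ^ (2 / p) * rhoInf nrm p f t := by
        gcongr
        exact rhoInf_nonneg (hf.nonneg_s14 h0) t
    _ = 4 * rhoInf nrm p f t / t ^ (2 / p) * s ^ (2 / p) := by
        rw [div_rpow (ht.trans hts).le ht.le]; ring

/-- Let `X` be a nonzero `p`-normed space (`0 < p ≤ 1`) and let `f : X → ℝ` be a negative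
definite function with `f 0 = 0`. Then `ρ_f s ≤ (4 ρ_f t / t ^ (2/p)) * s ^ (2/p)` for all
`0 < t < s`. -/
theorem rhoInf_growth
    (p : ℝ) (hp0 : 0 < p) (hp1 : p ≤ 1)
    (X : Type*) [AddCommGroup X] [Module ℝ X] (nrm : X → ℝ)
    (hnrm_nonneg : ∀ x, 0 ≤ nrm x)
    (hnrm_zero : ∀ x, nrm x = 0 ↔ x = 0)
    (hnrm_smul : ∀ (a : ℝ) (x : X), nrm (a • x) = |a| * nrm x)
    (hnrm_tri : ∀ x y, nrm (x + y) ^ p ≤ nrm x ^ p + nrm y ^ p)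
    (hX : ∃ x : X, x ≠ 0)
    (f : X → ℝ) (hf : IsNegDefKernel (fun x y => f (x - y))) (h0 : f 0 = 0) :
    ∀ t s : ℝ, 0 < t → t < s →
      rhoInf nrm p f s ≤ 4 * rhoInf nrm p f t / t ^ (2 / p) * s ^ (2 / p) :=
  rhoInf_growth_general p hp0 X nrm hnrm_nonneg hnrm_zero hnrm_smul hX f hf h0
end

section
/- Let 0 < p ≤ 1, let X be a nonzero p-normed space with metric d(x,y) = ‖x−y‖^p, and let f : X → ℝ be a positive definite function with f(0) = 1. For t > 0 set g_f(t) = inf{ 1 − f(x) : d(x,0) ≥ t }. Then for all 0 < t < s one has g_f(s) ≤ (4·g_f(t)/t^(2/p))·s^(2/p). -/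
/-- `g_f t = inf {1 - f x : d(x, 0) ≥ t}`, where `d(x, 0) = ‖x‖ ^ p`. -/
noncomputable def gInf {X : Type*} (nrm : X → ℝ) (p : ℝ) (f : X → ℝ) (t : ℝ) : ℝ :=
  sInf ((fun x => 1 - f x) '' {x | t ≤ nrm x ^ p})

/-!
Evaluating the positive definite form of `f` at the points `0, x, 2x` with coefficients
`1, -2, 1` gives `f 0 - f (2x) ≤ 4 (f 0 - f x)`. Iterating, `1 - f` grows at most by the factor
`4 ^ k` when `x` is scaled by `2 ^ k`, i.e. when `d(x, 0)` is scaled by `2 ^ (k p)`; choosing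
`2 ^ k` between `(s / t) ^ (1 / p)` and twice that gives the bound.
-/

section PosDef

variable {G : Type*} [AddCommGroup G] {f : G → ℝ}

theorem posDef_apply_neg (hf : IsPosDefKernel (fun x y => f (x - y))) (x : G) :
    f (-x) = f x := by
  simpa using hf.1 0 x

theorem posDef_apply_le_apply_zero (hf : IsPosDefKernel (fun x y => f (x - y))) (x : G) :
    f x ≤ f 0 := by
  have h := hf.2 2 ![0, x] ![1, -1]
  simp only [Fin.sum_univ_two, Fin.isValue, Matrix.cons_val_zero, sub_zero, mul_one,
    Matrix.cons_val_one, Matrix.cons_val_fin_one, mul_neg, zero_sub, posDef_apply_neg hf,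
    sub_self, neg_neg] at h
  linarith

theorem posDef_sub_apply_two_nsmul_le (hf : IsPosDefKernel (fun x y => f (x - y))) (x : G) :
    f 0 - f (2 • x) ≤ 4 * (f 0 - f x) := by
  have h := hf.2 3 ![0, x, 2 • x] ![1, -2, 1]
  have h_neg : f (-x + -x) = f (x + x) := by rw [← neg_add, posDef_apply_neg hf]
  simp only [two_nsmul, Fin.sum_univ_three, Fin.isValue, Matrix.cons_val_zero, sub_zero, mul_one,
    Matrix.cons_val_one, mul_neg, Matrix.cons_val, zero_sub, posDef_apply_neg hf, neg_add_rev,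
    h_neg, sub_self, neg_mul, neg_neg, sub_add_cancel_right, add_sub_cancel_right] at h
  rw [two_nsmul]
  linarith

theorem posDef_sub_apply_two_pow_nsmul_le (hf : IsPosDefKernel (fun x y => f (x - y)))
    (k : ℕ) (x : G) : f 0 - f (2 ^ k • x) ≤ 4 ^ k * (f 0 - f x) := by
  induction k with
  | zero => simp
  | succ k ih =>
    calc f 0 - f (2 ^ (k + 1) • x) = f 0 - f (2 • 2 ^ k • x) := by rw [pow_succ, mul_nsmul]
      _ ≤ 4 * (f 0 - f (2 ^ k • x)) := posDef_sub_apply_two_nsmul_le hf _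
      _ ≤ 4 * (4 ^ k * (f 0 - f x)) := by gcongr
      _ = 4 ^ (k + 1) * (f 0 - f x) := by ring

end PosDef

section GInf

variable {X : Type*} (nrm : X → ℝ) (p : ℝ) {f : X → ℝ}

theorem gInf_nonneg (hf : ∀ x, f x ≤ 1) (t : ℝ) : 0 ≤ gInf nrm p f t :=
  Real.sInf_nonneg <| by rintro _ ⟨x, -, rfl⟩; linarith [hf x]

theorem gInf_le_mul_gInf_of_map (hf : ∀ x, f x ≤ 1) {s t C : ℝ} (hts : t ≤ s) (hC : 0 < C)
    (φ : X → X) (hφ : ∀ x, t ≤ nrm x ^ p → s ≤ nrm (φ x) ^ p)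
    (hφf : ∀ x, 1 - f (φ x) ≤ C * (1 - f x)) :
    gInf nrm p f s ≤ C * gInf nrm p f t := by
  rcases ((fun x => 1 - f x) '' {x | t ≤ nrm x ^ p}).eq_empty_or_nonempty with hempty | hne
  · -- the level set at `s` is then empty too, and both infima are the junk value `sInf ∅ = 0`
    have hempty_s : (fun x => 1 - f x) '' {x | s ≤ nrm x ^ p} = ∅ :=
      Set.subset_empty_iff.1 <| hempty ▸ Set.image_mono fun x hx => hts.trans hx
    simp [gInf, hempty, hempty_s]
  · rw [← div_le_iff₀' hC]
    refine le_csInf hne ?_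
    rintro _ ⟨x, hx, rfl⟩
    rw [div_le_iff₀' hC]
    have hbdd : BddBelow ((fun x => 1 - f x) '' {x | s ≤ nrm x ^ p}) :=
      ⟨0, by rintro _ ⟨y, -, rfl⟩; linarith [hf y]⟩
    exact (csInf_le hbdd ⟨φ x, hφ x hx, rfl⟩).trans (hφf x)

theorem gInf_le_four_pow_mul [AddCommGroup X] [Module ℝ X] (hnrm_nonneg : ∀ x, 0 ≤ nrm x)
    (hnrm_smul : ∀ (a : ℝ) (x : X), nrm (a • x) = |a| * nrm x)
    (hf : IsPosDefKernel (fun x y => f (x - y))) (h0 : f 0 = 1)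
    {s t : ℝ} (hts : t ≤ s) {k : ℕ} (hk : s ≤ ((2 : ℝ) ^ k) ^ p * t) :
    gInf nrm p f s ≤ 4 ^ k * gInf nrm p f t := by
  have hf1 : ∀ x, f x ≤ 1 := fun x => h0 ▸ posDef_apply_le_apply_zero hf x
  refine gInf_le_mul_gInf_of_map nrm p hf1 hts (by positivity) (fun x => (2 ^ k : ℝ) • x)
    (fun x hx => ?_) (fun x => ?_)
  · calc s ≤ ((2 : ℝ) ^ k) ^ p * t := hk
      _ ≤ ((2 : ℝ) ^ k) ^ p * nrm x ^ p := by gcongr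
      _ = nrm ((2 ^ k : ℝ) • x) ^ p := by
        rw [hnrm_smul, abs_of_nonneg (by positivity),
          Real.mul_rpow (by positivity) (hnrm_nonneg x)]
  · have := posDef_sub_apply_two_pow_nsmul_le hf k x
    rw [h0] at this
    simpa [← Nat.cast_smul_eq_nsmul ℝ] using this

end GInf

theorem exists_two_pow_mem_Icc {r : ℝ} (hr : 1 ≤ r) : ∃ k : ℕ, (2 : ℝ) ^ k ∈ Set.Icc r (2 * r) := by
  obtain ⟨n, hn, hn'⟩ := exists_nat_pow_near hr one_lt_two
  exact ⟨n + 1, hn'.le, by rw [pow_succ']; gcongr⟩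

theorem gInf_growth_general
    (p : ℝ) (hp0 : 0 < p)
    (X : Type*) [AddCommGroup X] [Module ℝ X] (nrm : X → ℝ)
    (hnrm_nonneg : ∀ x, 0 ≤ nrm x)
    (hnrm_smul : ∀ (a : ℝ) (x : X), nrm (a • x) = |a| * nrm x)
    (f : X → ℝ) (hf : IsPosDefKernel (fun x y => f (x - y))) (h0 : f 0 = 1) :
    ∀ t s : ℝ, 0 < t → t < s →
      gInf nrm p f s ≤ 4 * gInf nrm p f t / t ^ (2 / p) * s ^ (2 / p) := by
  intro t s ht hts
  set r := (s / t) ^ p⁻¹ with hr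
  have hs : 0 < s := ht.trans hts
  have hst : 0 ≤ s / t := by positivity
  have hr1 : 1 ≤ r := Real.one_le_rpow ((one_le_div ht).2 hts.le) (by positivity)
  obtain ⟨k, hrk, hkr⟩ := exists_two_pow_mem_Icc hr1
  have hk : s ≤ ((2 : ℝ) ^ k) ^ p * t :=
    calc s = r ^ p * t := by rw [hr, Real.rpow_inv_rpow hst hp0.ne', div_mul_cancel₀ _ ht.ne']
      _ ≤ ((2 : ℝ) ^ k) ^ p * t := by gcongr
  have h4k : (4 : ℝ) ^ k ≤ 4 * (s ^ (2 / p) / t ^ (2 / p)) :=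
    calc (4 : ℝ) ^ k = ((2 : ℝ) ^ k) ^ 2 := by rw [← pow_mul, pow_mul']; norm_num
      _ ≤ (2 * r) ^ 2 := by gcongr
      _ = 4 * (s ^ (2 / p) / t ^ (2 / p)) := by
        rw [mul_pow, hr, ← Real.rpow_mul_natCast hst, ← Real.div_rpow hs.le ht.le]
        norm_num [div_eq_inv_mul]
  have hf1 : ∀ x, f x ≤ 1 := fun x => h0 ▸ posDef_apply_le_apply_zero hf x
  calc gInf nrm p f s ≤ 4 ^ k * gInf nrm p f t :=
        gInf_le_four_pow_mul nrm p hnrm_nonneg hnrm_smul hf h0 hts.le hk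
    _ ≤ 4 * (s ^ (2 / p) / t ^ (2 / p)) * gInf nrm p f t := by
        gcongr; exact gInf_nonneg nrm p hf1 t
    _ = 4 * gInf nrm p f t / t ^ (2 / p) * s ^ (2 / p) := by ring

/-- Let `X` be a nonzero `p`-normed space (`0 < p ≤ 1`) with metric `d(x,y) = ‖x - y‖ ^ p`,
and let `f : X → ℝ` be a positive definite function with `f 0 = 1`. Then
`g_f s ≤ (4 g_f t / t ^ (2/p)) * s ^ (2/p)` for all `0 < t < s`. -/
theorem gInf_growth
    (p : ℝ) (hp0 : 0 < p) (hp1 : p ≤ 1)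
    (X : Type*) [AddCommGroup X] [Module ℝ X] (nrm : X → ℝ)
    (hnrm_nonneg : ∀ x, 0 ≤ nrm x)
    (hnrm_zero : ∀ x, nrm x = 0 ↔ x = 0)
    (hnrm_smul : ∀ (a : ℝ) (x : X), nrm (a • x) = |a| * nrm x)
    (hnrm_tri : ∀ x y, nrm (x + y) ^ p ≤ nrm x ^ p + nrm y ^ p)
    (hX : ∃ x : X, x ≠ 0)
    (f : X → ℝ) (hf : IsPosDefKernel (fun x y => f (x - y))) (h0 : f 0 = 1) :
    ∀ t s : ℝ, 0 < t → t < s →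
      gInf nrm p f s ≤ 4 * gInf nrm p f t / t ^ (2 / p) * s ^ (2 / p) :=
  gInf_growth_general p hp0 X nrm hnrm_nonneg hnrm_smul f hf h0
end

section
/- Let 0 < p ≤ 1, let X be a p-normed space, let H be a real Hilbert space, let a > 0, let φ : [0,∞) → [0,∞) be nondecreasing, and let T : X → H be a map satisfying φ(‖x−y‖^p) ≤ ‖T(x) − T(y)‖² ≤ (‖x−y‖^p)^(2a) for all x, y ∈ X. Then there exists a continuous negative definite function f : X → ℝ with f(0) = 0 such that φ(‖x‖^p) ≤ f(x) ≤ (‖x‖^p)^(2a) for every x ∈ X. -/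
/-!
Abelian groups are amenable: every linear functional on `ℓ^∞(X)` lying below Dixmier's sublinear
functional (the infimum over finite families of translations of the supremum of the averaged
translates) is a translation-invariant mean, and Hahn–Banach provides one. Averaging the negative
definite kernel `(x, y) ↦ ‖T (x + z) - T (y + z)‖ ^ 2` over `z` with such a mean `L` yields, by
invariance, a function of `x - y` alone; it inherits negative definiteness and the two-sided
bounds pointwise, and continuity from `|‖u‖² - ‖v‖²| ≤ ‖u - v‖ (‖u‖ + ‖v‖)`.
-/

open scoped lp ENNReal BigOperators

structure TranslationFamily (X : Type*) where
  ι : Type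
  [instFintype : Fintype ι]
  [instNonempty : Nonempty ι]
  shift : ι → X

attribute [instance] TranslationFamily.instFintype TranslationFamily.instNonempty

namespace TranslationFamily

variable {X : Type*} [AddCommGroup X]

instance : Nonempty (TranslationFamily X) := ⟨⟨Unit, fun _ => 0⟩⟩

def add (s t : TranslationFamily X) : TranslationFamily X :=
  ⟨s.ι × t.ι, fun k => s.shift k.1 + t.shift k.2⟩

noncomputable def supAverage (g : ℓ^∞(X, ℝ)) (s : TranslationFamily X) : ℝ :=
  ⨆ z, 𝔼 i, g (z + s.shift i)

variable (g h : ℓ^∞(X, ℝ)) (s t : TranslationFamily X)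

lemma expect_le_norm (z : X) : 𝔼 i, g (z + s.shift i) ≤ ‖g‖ :=
  Finset.expect_le Finset.univ_nonempty fun _ _ =>
    (le_abs_self _).trans (lp.norm_apply_le_norm ENNReal.top_ne_zero g _)

lemma neg_norm_le_expect (z : X) : -‖g‖ ≤ 𝔼 i, g (z + s.shift i) :=
  Finset.le_expect Finset.univ_nonempty fun _ _ =>
    neg_le_of_abs_le (lp.norm_apply_le_norm ENNReal.top_ne_zero g _)

lemma le_supAverage (z : X) : 𝔼 i, g (z + s.shift i) ≤ supAverage g s :=
  le_ciSup ⟨‖g‖, by rintro _ ⟨z, rfl⟩; exact expect_le_norm g s z⟩ z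

lemma supAverage_le {M : ℝ} (h : ∀ z, 𝔼 i, g (z + s.shift i) ≤ M) : supAverage g s ≤ M :=
  ciSup_le h

lemma neg_norm_le_supAverage : -‖g‖ ≤ supAverage g s :=
  (neg_norm_le_expect g s 0).trans (le_supAverage g s 0)

lemma expect_add_shift (F : X → ℝ) :
    𝔼 k, F ((s.add t).shift k) = 𝔼 i, 𝔼 j, F (s.shift i + t.shift j) :=
  Finset.expect_product (Finset.univ : Finset s.ι) (Finset.univ : Finset t.ι) _

lemma supAverage_add_le : supAverage (g + h) (s.add t) ≤ supAverage g s + supAverage h t := by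
  refine supAverage_le _ _ fun z => ?_
  have hg : 𝔼 j, 𝔼 i, g (z + t.shift j + s.shift i) ≤ supAverage g s :=
    Finset.expect_le Finset.univ_nonempty fun j _ => le_supAverage g s _
  have hh : 𝔼 i, 𝔼 j, h (z + s.shift i + t.shift j) ≤ supAverage h t :=
    Finset.expect_le Finset.univ_nonempty fun i _ => le_supAverage h t _
  calc 𝔼 k, (g + h) (z + (s.add t).shift k)
      = 𝔼 j, 𝔼 i, g (z + t.shift j + s.shift i) +
          𝔼 i, 𝔼 j, h (z + s.shift i + t.shift j) := by
        rw [expect_add_shift s t (fun w => (g + h) (z + w))]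
        simp only [lp.coeFn_add, Pi.add_apply, Finset.expect_add_distrib]
        rw [Finset.expect_comm]
        simp only [add_assoc, add_comm (t.shift _)]
    _ ≤ _ := add_le_add hg hh

lemma supAverage_smul {c : ℝ} (hc : 0 ≤ c) : supAverage (c • g) s = c * supAverage g s := by
  simp only [supAverage, lp.coeFn_smul, Pi.smul_apply, smul_eq_mul, ← Finset.mul_expect,
    Real.mul_iSup_of_nonneg hc]

end TranslationFamily

lemma IsNegDefKernel.comp {X Y : Type*} {N : X → X → ℝ} (hN : IsNegDefKernel N) (T : Y → X) :
    IsNegDefKernel fun x y => N (T x) (T y) :=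
  ⟨fun x y => hN.1 (T x) (T y), fun n x c hc => hN.2 n (T ∘ x) c hc⟩

/-- `∑ᵢⱼ cᵢ cⱼ ‖uᵢ - uⱼ‖² = -2 ‖∑ᵢ cᵢ uᵢ‖²` when `∑ᵢ cᵢ = 0`. -/
theorem isNegDefKernel_norm_sub_sq_s19 (H : Type*) [SeminormedAddCommGroup H]
    [InnerProductSpace ℝ H] :
    IsNegDefKernel fun u v : H => ‖u - v‖ ^ 2 := by
  refine ⟨fun u v => by simp only [norm_sub_rev], fun n u c hc => ?_⟩
  have hsq : ∑ i, ∑ j, ‖u i‖ ^ 2 * c i * c j = 0 := by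
    simp [← Finset.mul_sum, hc]
  have hsq' : ∑ i, ∑ j, ‖u j‖ ^ 2 * c i * c j = 0 := by
    rw [Finset.sum_comm]; simp [← Finset.mul_sum, ← Finset.sum_mul, hc]
  have hinner : ∑ i, ∑ j, inner ℝ (u i) (u j) * c i * c j = ‖∑ i, c i • u i‖ ^ 2 := by
    simp only [← real_inner_self_eq_norm_sq, sum_inner, inner_sum, real_inner_smul_left,
      real_inner_smul_right]
    exact Finset.sum_congr rfl fun i _ => Finset.sum_congr rfl fun j _ => by
      rw [real_inner_comm]; ring
  calc ∑ i, ∑ j, ‖u i - u j‖ ^ 2 * c i * c j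
      = ∑ i, ∑ j, ‖u i‖ ^ 2 * c i * c j + ∑ i, ∑ j, ‖u j‖ ^ 2 * c i * c j
        - 2 * ∑ i, ∑ j, inner ℝ (u i) (u j) * c i * c j := by
        simp only [norm_sub_sq_real, Finset.mul_sum, ← Finset.sum_add_distrib,
          ← Finset.sum_sub_distrib]
        exact Finset.sum_congr rfl fun i _ => Finset.sum_congr rfl fun j _ => by ring
    _ = -2 * ‖∑ i, c i • u i‖ ^ 2 := by rw [hsq, hsq', hinner]; ring
    _ ≤ 0 := mul_nonpos_of_nonpos_of_nonneg (by norm_num) (sq_nonneg _)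

section UpperMean

variable {X : Type*} [AddCommGroup X]

/-- Dixmier's sublinear functional; any linear functional below it is a translation-invariant
mean. -/
noncomputable def upperMean (g : ℓ^∞(X, ℝ)) : ℝ :=
  ⨅ s : TranslationFamily X, s.supAverage g

lemma upperMean_le_supAverage (g : ℓ^∞(X, ℝ)) (s : TranslationFamily X) :
    upperMean g ≤ s.supAverage g :=
  ciInf_le ⟨-‖g‖, by rintro _ ⟨s, rfl⟩; exact s.neg_norm_le_supAverage g⟩ s

lemma upperMean_add_le (g h : ℓ^∞(X, ℝ)) : upperMean (g + h) ≤ upperMean g + upperMean h :=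
  le_ciInf_add_ciInf fun s t =>
    (upperMean_le_supAverage _ (s.add t)).trans (s.supAverage_add_le g h t)

lemma upperMean_smul {c : ℝ} (hc : 0 ≤ c) (g : ℓ^∞(X, ℝ)) :
    upperMean (c • g) = c * upperMean g := by
  simp only [upperMean, TranslationFamily.supAverage_smul _ _ hc, Real.mul_iInf_of_nonneg hc]

lemma upperMean_zero : upperMean (0 : ℓ^∞(X, ℝ)) = 0 := by
  have h := upperMean_smul zero_le_two (0 : ℓ^∞(X, ℝ))
  rw [smul_zero] at h
  linarith

lemma upperMean_le_of_forall_le {g : ℓ^∞(X, ℝ)} {M : ℝ} (h : ∀ z, g z ≤ M) :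
    upperMean g ≤ M :=
  (upperMean_le_supAverage g ⟨Unit, fun _ => 0⟩).trans <|
    TranslationFamily.supAverage_le _ _ fun z => by simpa using h z

/-- Averaging `g - g(· + s)` over `0, s, …, n • s` telescopes to at most `2‖g‖ / (n + 1)`. -/
lemma upperMean_sub_translate_nonpos {g g' : ℓ^∞(X, ℝ)} {s : X}
    (hg' : ∀ z, g' z = g (z + s)) : upperMean (g - g') ≤ 0 := by
  have hbound : ∀ n : ℕ, upperMean (g - g') ≤ 2 * ‖g‖ * (1 / (n + 1)) := by
    intro n
    refine (upperMean_le_supAverage _ ⟨Fin (n + 1), fun i => (i : ℕ) • s⟩).trans <|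
      TranslationFamily.supAverage_le _ _ fun z => ?_
    have htelescope :
        ∑ i : Fin (n + 1), (g - g') (z + (i : ℕ) • s) = g z - g (z + (n + 1) • s) := by
      simp only [lp.coeFn_sub, Pi.sub_apply, hg', add_assoc, ← succ_nsmul]
      rw [Fin.sum_univ_eq_sum_range (fun i => g (z + i • s) - g (z + (i + 1) • s)),
        Finset.sum_range_sub', zero_nsmul, add_zero]
    have hnorm := fun w => abs_le.mp (lp.norm_apply_le_norm ENNReal.top_ne_zero g w)
    rw [Fintype.expect_eq_sum_div_card, htelescope, Fintype.card_fin, Nat.cast_add_one,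
      mul_one_div, div_le_div_iff_of_pos_right (by positivity)]
    linarith [(hnorm z).2, (hnorm (z + (n + 1) • s)).1]
  simpa using
    ge_of_tendsto' (tendsto_one_div_add_atTop_nhds_zero_nat.const_mul (2 * ‖g‖)) hbound

end UpperMean

section InvariantMean

variable {X : Type*} [AddCommGroup X]

structure IsInvariantMean (L : ℓ^∞(X, ℝ) →ₗ[ℝ] ℝ) : Prop where
  le_of_forall_le : ∀ (g : ℓ^∞(X, ℝ)) (M : ℝ), (∀ z, g z ≤ M) → L g ≤ M
  map_eq_of_translate : ∀ (g g' : ℓ^∞(X, ℝ)) (s : X), (∀ z, g' z = g (z + s)) → L g' = L g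

theorem exists_isInvariantMean (X : Type*) [AddCommGroup X] :
    ∃ L : ℓ^∞(X, ℝ) →ₗ[ℝ] ℝ, IsInvariantMean L := by
  obtain ⟨L, -, hL⟩ :=
    exists_extension_of_le_sublinear (⟨⊥, 0⟩ : ℓ^∞(X, ℝ) →ₗ.[ℝ] ℝ) upperMean
      (fun c hc => upperMean_smul hc.le) upperMean_add_le fun g => by
      simp only [(Submodule.mem_bot ℝ).mp g.2, LinearPMap.mk_apply, LinearMap.zero_apply,
        upperMean_zero, le_refl]
  refine ⟨L, fun g M h => (hL g).trans (upperMean_le_of_forall_le h), fun g g' s hg' => ?_⟩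
  have h₁ : L (g - g') ≤ 0 := (hL _).trans (upperMean_sub_translate_nonpos hg')
  have h₂ : L (g' - g) ≤ 0 := (hL _).trans <|
    upperMean_sub_translate_nonpos (s := -s) fun z => by simp [hg']
  rw [map_sub] at h₁ h₂
  linarith

namespace IsInvariantMean

variable {L : ℓ^∞(X, ℝ) →ₗ[ℝ] ℝ}

lemma ge_of_forall_ge (hL : IsInvariantMean L) {g : ℓ^∞(X, ℝ)} {m : ℝ} (h : ∀ z, m ≤ g z) :
    m ≤ L g := by
  have := hL.le_of_forall_le (-g) (-m) fun z => by simpa using h z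
  rwa [map_neg, neg_le_neg_iff] at this

lemma abs_le_of_forall_abs_le (hL : IsInvariantMean L) {g : ℓ^∞(X, ℝ)} {M : ℝ}
    (h : ∀ z, |g z| ≤ M) : |L g| ≤ M :=
  abs_le.mpr ⟨hL.ge_of_forall_ge fun z => (abs_le.mp (h z)).1,
    hL.le_of_forall_le g M fun z => (abs_le.mp (h z)).2⟩

theorem isNegDefKernel {Y : Type*} (hL : IsInvariantMean L) {k : Y → Y → ℓ^∞(X, ℝ)}
    (hk : ∀ z, IsNegDefKernel fun x y => k x y z) : IsNegDefKernel fun x y => L (k x y) := by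
  refine ⟨fun x y => congrArg L (lp.ext (funext fun z => (hk z).1 x y)), fun n x c hc => ?_⟩
  calc ∑ i, ∑ j, L (k (x i) (x j)) * c i * c j
      = L (∑ i, ∑ j, (c i * c j) • k (x i) (x j)) := by
        simp only [map_sum, map_smul, smul_eq_mul]
        exact Finset.sum_congr rfl fun i _ => Finset.sum_congr rfl fun j _ => by ring
    _ ≤ 0 := hL.le_of_forall_le _ 0 fun z => by
        simpa only [lp.coeFn_sum, lp.coeFn_smul, Finset.sum_apply, Pi.smul_apply, smul_eq_mul,
          mul_comm, mul_left_comm, mul_assoc] using (hk z).2 n x c hc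

end IsInvariantMean

end InvariantMean

lemma abs_norm_sq_sub_norm_sq_le {E : Type*} [SeminormedAddCommGroup E] (u v : E) :
    |‖u‖ ^ 2 - ‖v‖ ^ 2| ≤ ‖u - v‖ * (‖u‖ + ‖v‖) := by
  rw [sq_sub_sq, abs_mul, abs_of_nonneg (by positivity : 0 ≤ ‖u‖ + ‖v‖), mul_comm]
  gcongr
  exact abs_norm_sub_norm_le u v

section IncrementSq

variable {X H : Type*} [AddCommGroup X] [SeminormedAddCommGroup H] {T : X → H} {ρ : X → ℝ}

def incrementSq (hρ : ∀ x y, ‖T x - T y‖ ≤ ρ (x - y)) (x y : X) : ℓ^∞(X, ℝ) :=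
  ⟨fun z => ‖T (x + z) - T (y + z)‖ ^ 2, memℓp_infty ⟨ρ (x - y) ^ 2, by
    rintro _ ⟨z, rfl⟩
    simp only [norm_pow, norm_norm]
    gcongr
    simpa only [add_sub_add_right_eq_sub] using hρ (x + z) (y + z)⟩⟩

@[simp]
lemma incrementSq_apply (hρ : ∀ x y, ‖T x - T y‖ ≤ ρ (x - y)) (x y z : X) :
    incrementSq hρ x y z = ‖T (x + z) - T (y + z)‖ ^ 2 :=
  rfl

variable {L : ℓ^∞(X, ℝ) →ₗ[ℝ] ℝ}

lemma IsInvariantMean.map_incrementSq_sub_zero (hL : IsInvariantMean L)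
    (hρ : ∀ x y, ‖T x - T y‖ ≤ ρ (x - y)) (x y : X) :
    L (incrementSq hρ (x - y) 0) = L (incrementSq hρ x y) :=
  (hL.map_eq_of_translate _ _ y fun z => by
    simp only [incrementSq_apply, zero_add, sub_add_add_cancel, add_comm y z]).symm

lemma IsInvariantMean.isNegDefKernel_incrementSq [InnerProductSpace ℝ H]
    (hL : IsInvariantMean L) (hρ : ∀ x y, ‖T x - T y‖ ≤ ρ (x - y)) :
    IsNegDefKernel fun x y => L (incrementSq hρ x y) :=
  hL.isNegDefKernel fun z => (isNegDefKernel_norm_sub_sq_s19 H).comp fun x => T (x + z)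

lemma IsInvariantMean.abs_map_incrementSq_sub_le (hL : IsInvariantMean L)
    (hρ : ∀ x y, ‖T x - T y‖ ≤ ρ (x - y)) (x y : X) :
    |L (incrementSq hρ y 0) - L (incrementSq hρ x 0)| ≤ ρ (y - x) * (ρ y + ρ x) := by
  rw [← map_sub]
  refine hL.abs_le_of_forall_abs_le fun z => ?_
  have hu := hρ (y + z) z
  have hv := hρ (x + z) z
  have huv := hρ (y + z) (x + z)
  simp only [add_sub_cancel_right, add_sub_add_right_eq_sub] at hu hv huv
  simp only [lp.coeFn_sub, Pi.sub_apply, incrementSq_apply, zero_add]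
  refine (abs_norm_sq_sub_norm_sq_le _ _).trans ?_
  rw [sub_sub_sub_cancel_right]
  exact mul_le_mul huv (add_le_add hu hv) (by positivity) ((norm_nonneg _).trans huv)

end IncrementSq

lemma exists_pos_forall_rpow_mul_lt {a ε : ℝ} (ha : 0 < a) (hε : 0 < ε) (K : ℝ) :
    ∃ δ > 0, ∀ t, 0 ≤ t → t < δ → t ^ a * ((K + t) ^ a + K ^ a) < ε := by
  have hcont : ContinuousAt (fun t : ℝ => t ^ a * ((K + t) ^ a + K ^ a)) 0 :=
    ((Real.continuous_rpow_const ha.le).mul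
      (((Real.continuous_rpow_const ha.le).comp (continuous_const.add continuous_id)).add
        continuous_const)).continuousAt
  obtain ⟨δ, hδ, h⟩ := Metric.continuousAt_iff.mp hcont ε hε
  refine ⟨δ, hδ, fun t ht htδ => ?_⟩
  have := h (x := t) (by rwa [Real.dist_0_eq_abs, abs_of_nonneg ht])
  rw [Real.zero_rpow ha.ne', zero_mul, Real.dist_eq, sub_zero] at this
  exact (le_abs_self _).trans_lt this

theorem exists_negDef_function_with_bounds_general
    (p : ℝ)
    (X : Type*) [AddCommGroup X] (nrm : X → ℝ)
    (hnrm_nonneg : ∀ x, 0 ≤ nrm x)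
    (hnrm_tri : ∀ x y, nrm (x + y) ^ p ≤ nrm x ^ p + nrm y ^ p)
    (H : Type*) [NormedAddCommGroup H] [InnerProductSpace ℝ H]
    (a : ℝ) (ha : 0 < a)
    (φ : ℝ → ℝ)
    (T : X → H)
    (hT : ∀ x y, φ (nrm (x - y) ^ p) ≤ ‖T x - T y‖ ^ 2 ∧
      ‖T x - T y‖ ^ 2 ≤ (nrm (x - y) ^ p) ^ (2 * a)) :
    ∃ f : X → ℝ,
      (∀ (x : X), ∀ ε > (0 : ℝ), ∃ δ > (0 : ℝ), ∀ y : X,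
        nrm (y - x) ^ p < δ → |f y - f x| < ε) ∧
      IsNegDefKernel (fun x y => f (x - y)) ∧
      f 0 = 0 ∧
      ∀ x, φ (nrm x ^ p) ≤ f x ∧ f x ≤ (nrm x ^ p) ^ (2 * a) := by
  have hpow_nonneg : ∀ x, 0 ≤ nrm x ^ p := fun x => Real.rpow_nonneg (hnrm_nonneg x) p
  have hρ : ∀ x y, ‖T x - T y‖ ≤ (nrm (x - y) ^ p) ^ a := fun x y => by
    have h := (hT x y).2
    rw [mul_comm, Real.rpow_mul (hpow_nonneg _), Real.rpow_two] at h
    exact (pow_le_pow_iff_left₀ (norm_nonneg _) (Real.rpow_nonneg (hpow_nonneg _) a) two_ne_zero).mp h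
  obtain ⟨L, hL⟩ := exists_isInvariantMean X
  refine ⟨fun x => L (incrementSq (ρ := fun w => (nrm w ^ p) ^ a) hρ x 0),
    fun x ε hε => ?_, ?_, ?_, fun x => ⟨?_, ?_⟩⟩
  · obtain ⟨δ, hδ, hsmall⟩ := exists_pos_forall_rpow_mul_lt ha hε (nrm x ^ p)
    refine ⟨δ, hδ, fun y hyx => (hL.abs_map_incrementSq_sub_le hρ x y).trans_lt ?_⟩
    have htri : nrm y ^ p ≤ nrm x ^ p + nrm (y - x) ^ p := by simpa using hnrm_tri x (y - x)
    refine lt_of_le_of_lt ?_ (hsmall _ (hpow_nonneg _) hyx)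
    gcongr
    · exact Real.rpow_nonneg (hpow_nonneg _) a
    · exact hpow_nonneg y
  · simpa only [hL.map_incrementSq_sub_zero] using hL.isNegDefKernel_incrementSq hρ
  · exact (congrArg L (lp.ext (funext fun z => by simp))).trans (map_zero L)
  · exact hL.ge_of_forall_ge fun z => by simpa using (hT (x + z) z).1
  · exact hL.le_of_forall_le _ _ fun z => by simpa using (hT (x + z) z).2

/-- Invariant-mean step: let `X` be a `p`-normed space (`0 < p ≤ 1`), `H` a real Hilbert
space, `a > 0`, `φ : [0,∞) → [0,∞)` nondecreasing, and `T : X → H` a map satisfying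
`φ (‖x - y‖ ^ p) ≤ ‖T x - T y‖ ^ 2 ≤ (‖x - y‖ ^ p) ^ (2a)` for all `x, y`. Then there exists
a continuous (w.r.t. the metric `d(x,y) = ‖x - y‖ ^ p`) negative definite function
`f : X → ℝ` with `f 0 = 0` and `φ (‖x‖ ^ p) ≤ f x ≤ (‖x‖ ^ p) ^ (2a)` for every `x`. -/
theorem exists_negDef_function_with_bounds
    (p : ℝ) (hp0 : 0 < p) (hp1 : p ≤ 1)
    (X : Type*) [AddCommGroup X] [Module ℝ X] (nrm : X → ℝ)
    (hnrm_nonneg : ∀ x, 0 ≤ nrm x)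
    (hnrm_zero : ∀ x, nrm x = 0 ↔ x = 0)
    (hnrm_smul : ∀ (a : ℝ) (x : X), nrm (a • x) = |a| * nrm x)
    (hnrm_tri : ∀ x y, nrm (x + y) ^ p ≤ nrm x ^ p + nrm y ^ p)
    (H : Type*) [NormedAddCommGroup H] [InnerProductSpace ℝ H] [CompleteSpace H]
    (a : ℝ) (ha : 0 < a)
    (φ : ℝ → ℝ) (hφ_mono : MonotoneOn φ (Set.Ici 0)) (hφ_nonneg : ∀ t, 0 ≤ t → 0 ≤ φ t)
    (T : X → H)
    (hT : ∀ x y, φ (nrm (x - y) ^ p) ≤ ‖T x - T y‖ ^ 2 ∧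
      ‖T x - T y‖ ^ 2 ≤ (nrm (x - y) ^ p) ^ (2 * a)) :
    ∃ f : X → ℝ,
      (∀ (x : X), ∀ ε > (0 : ℝ), ∃ δ > (0 : ℝ), ∀ y : X,
        nrm (y - x) ^ p < δ → |f y - f x| < ε) ∧
      IsNegDefKernel (fun x y => f (x - y)) ∧
      f 0 = 0 ∧
      ∀ x, φ (nrm x ^ p) ≤ f x ∧ f x ≤ (nrm x ^ p) ^ (2 * a) :=
  exists_negDef_function_with_bounds_general p X nrm hnrm_nonneg hnrm_tri H a ha φ T hT
end
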